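/- arXiv:1306.3050 — 7 statements merged into one kernel-verified Lean document; each statement's English description precedes it below -/
import Mathlib

section
/- (Theorem 4.7, '∧ is And' for MIA) Let P, Q be Modal Interface Automata with common input and output alphabets and states p ∈ P, q ∈ Q. Then: (i) there exist a MIA R and r ∈ R with r ⊑_MIA p and r ⊑_MIA q if and only if p ∧ q is defined. Further, if p ∧ q is defined, then for any MIA R and r ∈ R: (ii) r ⊑_MIA p and r ⊑_MIA q if and only if r ⊑_MIA p ∧ q. -/
/-- Transition labels: `none` is the silent action τ, `some a` a visible action. -/
abbrev Lbl (A : Type) : Type := Option A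

/-- Weak internal transition: a (possibly empty) sequence of τ-steps. -/
def WeakEps {S A : Type} (tr : S → Lbl A → S → Prop) : S → S → Prop :=
  Relation.ReflTransGen (fun p q => tr p none q)

/-- Weak transition: τ-steps followed by one step labelled `α`. -/
def WeakTr {S A : Type} (tr : S → Lbl A → S → Prop) (p : S) (α : Lbl A) (p' : S) : Prop :=
  ∃ p'', WeakEps tr p p'' ∧ tr p'' α p'

/-- State set of binary compositions: copies of both components plus combined states. -/
inductive CState (S T : Type) : Type
  | left : S → CState S T
  | right : T → CState S T
  | comb : S → T → CState S T

/-- `(must, may)` is a Modal Interface Automaton over inputs `I` and outputs `O`: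
a syntactically consistent dMTS with labels in `I ∪ O`, at most one (disjunctive)
must-transition per input, and every input-may-transition underlies it. -/
def IsMIA {S A : Type} (I O : Set A) (must : S → A → Set S → Prop)
    (may : S → Lbl A → S → Prop) : Prop :=
  Disjoint I O ∧
  (∀ s a S', must s a S' → S'.Nonempty) ∧
  (∀ s a S' s', must s a S' → s' ∈ S' → may s (some a) s') ∧
  (∀ s a S', must s a S' → a ∈ I ∪ O) ∧
  (∀ s a s', may s (some a) s' → a ∈ I ∪ O) ∧
  (∀ s i S' S'', i ∈ I → must s i S' → must s i S'' → S' = S'') ∧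
  (∀ s i s', i ∈ I → may s (some i) s' → ∃ S', must s i S' ∧ s' ∈ S')

/-- Observational MIA-refinement relation: like modal refinement, but
may-transitions only need to be matched for outputs and τ. -/
def IsMIASim {S T A : Type} (O : Set A) (mustP : S → A → Set S → Prop)
    (mayP : S → Lbl A → S → Prop) (mustQ : T → A → Set T → Prop)
    (mayQ : T → Lbl A → T → Prop) (R : S → T → Prop) : Prop :=
  ∀ p q, R p q →
    (∀ a Q', mustQ q a Q' → ∃ P', mustP p a P' ∧ ∀ p' ∈ P', ∃ q' ∈ Q', R p' q') ∧
    (∀ a p', a ∈ O → mayP p (some a) p' → ∃ q', WeakTr mayQ q (some a) q' ∧ R p' q') ∧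
    (∀ p', mayP p none p' → ∃ q', WeakEps mayQ q q' ∧ R p' q')

/-- MIA-refinement `p ⊑_MIA q`. -/
def MIARef {S T A : Type} (O : Set A) (mustP : S → A → Set S → Prop)
    (mayP : S → Lbl A → S → Prop) (mustQ : T → A → Set T → Prop)
    (mayQ : T → Lbl A → T → Prop) (p : S) (q : T) : Prop :=
  ∃ R, IsMIASim O mustP mayP mustQ mayQ R ∧ R p q

/-- Must-transitions of the MIA conjunctive product `P & Q`
(rules (OMust1), (OMust2), (IMust1)-(IMust3) plus inherited ones). -/
inductive MConjMust {S T A : Type} (I O : Set A) (mustP : S → A → Set S → Prop)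
    (mayP : S → Lbl A → S → Prop) (mustQ : T → A → Set T → Prop)
    (mayQ : T → Lbl A → T → Prop) : CState S T → A → Set (CState S T) → Prop
  | fromP {p a P'} : mustP p a P' →
      MConjMust I O mustP mayP mustQ mayQ (CState.left p) a (CState.left '' P')
  | fromQ {q a Q'} : mustQ q a Q' →
      MConjMust I O mustP mayP mustQ mayQ (CState.right q) a (CState.right '' Q')
  | omust1 {p q o P'} : o ∈ O → mustP p o P' → (∃ q', WeakTr mayQ q (some o) q') →
      MConjMust I O mustP mayP mustQ mayQ (CState.comb p q) o
        {x | ∃ p' q', x = CState.comb p' q' ∧ p' ∈ P' ∧ WeakTr mayQ q (some o) q'}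
  | omust2 {p q o Q'} : o ∈ O → (∃ p', WeakTr mayP p (some o) p') → mustQ q o Q' →
      MConjMust I O mustP mayP mustQ mayQ (CState.comb p q) o
        {x | ∃ p' q', x = CState.comb p' q' ∧ WeakTr mayP p (some o) p' ∧ q' ∈ Q'}
  | imust1 {p q i P'} : i ∈ I → mustP p i P' → ¬ (∃ Q', mustQ q i Q') →
      MConjMust I O mustP mayP mustQ mayQ (CState.comb p q) i (CState.left '' P')
  | imust2 {p q i Q'} : i ∈ I → ¬ (∃ P', mustP p i P') → mustQ q i Q' →
      MConjMust I O mustP mayP mustQ mayQ (CState.comb p q) i (CState.right '' Q')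
  | imust3 {p q i P' Q'} : i ∈ I → mustP p i P' → mustQ q i Q' →
      MConjMust I O mustP mayP mustQ mayQ (CState.comb p q) i
        {x | ∃ p' q', x = CState.comb p' q' ∧ p' ∈ P' ∧ q' ∈ Q'}

/-- May-transitions of the MIA conjunctive product `P & Q`
(rules (May1)-(May3), (IMay1)-(IMay3) plus inherited ones). -/
inductive MConjMay {S T A : Type} (I O : Set A) (mayP : S → Lbl A → S → Prop)
    (mayQ : T → Lbl A → T → Prop) : CState S T → Lbl A → CState S T → Prop
  | fromP {p α p'} : mayP p α p' → MConjMay I O mayP mayQ (CState.left p) α (CState.left p')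
  | fromQ {q α q'} : mayQ q α q' → MConjMay I O mayP mayQ (CState.right q) α (CState.right q')
  | may1 {p q p'} : WeakTr mayP p none p' →
      MConjMay I O mayP mayQ (CState.comb p q) none (CState.comb p' q)
  | may2 {p q q'} : WeakTr mayQ q none q' →
      MConjMay I O mayP mayQ (CState.comb p q) none (CState.comb p q')
  | may3 {p q α p' q'} : (∀ x, α = some x → x ∈ O) → WeakTr mayP p α p' →
      WeakTr mayQ q α q' → MConjMay I O mayP mayQ (CState.comb p q) α (CState.comb p' q')
  | imay1 {p q i p'} : i ∈ I → mayP p (some i) p' → ¬ (∃ q', mayQ q (some i) q') →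
      MConjMay I O mayP mayQ (CState.comb p q) (some i) (CState.left p')
  | imay2 {p q i q'} : i ∈ I → ¬ (∃ p', mayP p (some i) p') → mayQ q (some i) q' →
      MConjMay I O mayP mayQ (CState.comb p q) (some i) (CState.right q')
  | imay3 {p q i p' q'} : i ∈ I → mayP p (some i) p' → mayQ q (some i) q' →
      MConjMay I O mayP mayQ (CState.comb p q) (some i) (CState.comb p' q')

/-- The set `F` of logically inconsistent states of the MIA conjunctive product
(rules (F1)-(F3)); only combined states `p ∧ q` can be inconsistent. -/
inductive MIncons {S T A : Type} (I O : Set A) (mustP : S → A → Set S → Prop)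
    (mayP : S → Lbl A → S → Prop) (mustQ : T → A → Set T → Prop)
    (mayQ : T → Lbl A → T → Prop) : CState S T → Prop
  | f1 {p q o P'} : o ∈ O → mustP p o P' → ¬ (∃ q', WeakTr mayQ q (some o) q') →
      MIncons I O mustP mayP mustQ mayQ (CState.comb p q)
  | f2 {p q o Q'} : o ∈ O → ¬ (∃ p', WeakTr mayP p (some o) p') → mustQ q o Q' →
      MIncons I O mustP mayP mustQ mayQ (CState.comb p q)
  | f3 {p q a R'} : MConjMust I O mustP mayP mustQ mayQ (CState.comb p q) a R' →
      (∀ x ∈ R', MIncons I O mustP mayP mustQ mayQ x) →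
      MIncons I O mustP mayP mustQ mayQ (CState.comb p q)

/-- Must-transitions of the MIA-conjunction `P ∧ Q`: the product pruned of
inconsistent states (which are also removed from targets). -/
def MAndMust {S T A : Type} (I O : Set A) (mustP : S → A → Set S → Prop)
    (mayP : S → Lbl A → S → Prop) (mustQ : T → A → Set T → Prop)
    (mayQ : T → Lbl A → T → Prop) (s : CState S T) (a : A) (R'' : Set (CState S T)) : Prop :=
  ¬ MIncons I O mustP mayP mustQ mayQ s ∧
  ∃ R', MConjMust I O mustP mayP mustQ mayQ s a R' ∧
    R'' = {x ∈ R' | ¬ MIncons I O mustP mayP mustQ mayQ x}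

/-- May-transitions of the MIA-conjunction `P ∧ Q`. -/
def MAndMay {S T A : Type} (I O : Set A) (mustP : S → A → Set S → Prop)
    (mayP : S → Lbl A → S → Prop) (mustQ : T → A → Set T → Prop)
    (mayQ : T → Lbl A → T → Prop) (s : CState S T) (α : Lbl A) (s' : CState S T) : Prop :=
  ¬ MIncons I O mustP mayP mustQ mayQ s ∧ ¬ MIncons I O mustP mayP mustQ mayQ s' ∧
  MConjMay I O mayP mayQ s α s'


section AuxMIA

variable {S T A U : Type} {I O : Set A}
variable {mustP : S → A → Set S → Prop} {mayP : S → Lbl A → S → Prop}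
variable {mustQ : T → A → Set T → Prop} {mayQ : T → Lbl A → T → Prop}
variable {mustR : U → A → Set U → Prop} {mayR : U → Lbl A → U → Prop}

lemma not_incons_left (p : S) :
    ¬ MIncons I O mustP mayP mustQ mayQ (CState.left p) := by
  intro h; cases h

lemma not_incons_right (q : T) :
    ¬ MIncons I O mustP mayP mustQ mayQ (CState.right q) := by
  intro h; cases h

lemma weakTr_of_step {X : Type} {tr : X → Lbl A → X → Prop} {p p' : X} {α : Lbl A}
    (h : tr p α p') : WeakTr tr p α p' :=
  ⟨p, Relation.ReflTransGen.refl, h⟩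

lemma weakEps_of_none {X : Type} {tr : X → Lbl A → X → Prop} {p p' : X}
    (h : WeakTr tr p none p') : WeakEps tr p p' := by
  obtain ⟨x, he, hs⟩ := h
  exact he.tail hs

lemma weakTr_pre {X : Type} {tr : X → Lbl A → X → Prop} {p p₁ p' : X} {α : Lbl A}
    (h : WeakEps tr p p₁) (h' : WeakTr tr p₁ α p') : WeakTr tr p α p' := by
  obtain ⟨x, he, hs⟩ := h'
  exact ⟨x, h.trans he, hs⟩

lemma liftL_eps {p p' : S} (h : WeakEps mayP p p') :
    WeakEps (MAndMay I O mustP mayP mustQ mayQ) (CState.left p) (CState.left p') := by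
  induction h with
  | refl => exact Relation.ReflTransGen.refl
  | tail _ hs ih =>
    exact ih.tail ⟨not_incons_left _, not_incons_left _, MConjMay.fromP hs⟩

lemma liftL_tr {p p' : S} {α : Lbl A} (h : WeakTr mayP p α p') :
    WeakTr (MAndMay I O mustP mayP mustQ mayQ) (CState.left p) α (CState.left p') := by
  obtain ⟨x, he, hs⟩ := h
  exact ⟨CState.left x, liftL_eps he,
    ⟨not_incons_left _, not_incons_left _, MConjMay.fromP hs⟩⟩

lemma liftR_eps {q q' : T} (h : WeakEps mayQ q q') :
    WeakEps (MAndMay I O mustP mayP mustQ mayQ) (CState.right q) (CState.right q') := by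
  induction h with
  | refl => exact Relation.ReflTransGen.refl
  | tail _ hs ih =>
    exact ih.tail ⟨not_incons_right _, not_incons_right _, MConjMay.fromQ hs⟩

lemma liftR_tr {q q' : T} {α : Lbl A} (h : WeakTr mayQ q α q') :
    WeakTr (MAndMay I O mustP mayP mustQ mayQ) (CState.right q) α (CState.right q') := by
  obtain ⟨x, he, hs⟩ := h
  exact ⟨CState.right x, liftR_eps he,
    ⟨not_incons_right _, not_incons_right _, MConjMay.fromQ hs⟩⟩

lemma sim_weakEps {X Y : Type} {m1 : X → A → Set X → Prop} {y1 : X → Lbl A → X → Prop}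
    {m2 : Y → A → Set Y → Prop} {y2 : Y → Lbl A → Y → Prop} {R : X → Y → Prop}
    (hsim : IsMIASim O m1 y1 m2 y2 R) {r r' : X} {s : Y}
    (hr : R r s) (h : WeakEps y1 r r') : ∃ s', WeakEps y2 s s' ∧ R r' s' := by
  induction h with
  | refl => exact ⟨s, Relation.ReflTransGen.refl, hr⟩
  | tail _ hs ih =>
    obtain ⟨s₁, he, hr₁⟩ := ih
    obtain ⟨s', he', hr'⟩ := (hsim _ _ hr₁).2.2 _ hs
    exact ⟨s', he.trans he', hr'⟩

lemma sim_weakTr {X Y : Type} {m1 : X → A → Set X → Prop} {y1 : X → Lbl A → X → Prop}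
    {m2 : Y → A → Set Y → Prop} {y2 : Y → Lbl A → Y → Prop} {R : X → Y → Prop}
    (hsim : IsMIASim O m1 y1 m2 y2 R) {r r' : X} {s : Y} {o : A}
    (hr : R r s) (ho : o ∈ O) (h : WeakTr y1 r (some o) r') :
    ∃ s', WeakTr y2 s (some o) s' ∧ R r' s' := by
  obtain ⟨x, he, hs⟩ := h
  obtain ⟨s₁, he₁, hr₁⟩ := sim_weakEps hsim hr he
  obtain ⟨s', htr, hr'⟩ := (hsim _ _ hr₁).2.1 _ _ ho hs
  exact ⟨s', weakTr_pre he₁ htr, hr'⟩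

lemma sim_comp {X Y Z : Type} {m1 : X → A → Set X → Prop} {y1 : X → Lbl A → X → Prop}
    {m2 : Y → A → Set Y → Prop} {y2 : Y → Lbl A → Y → Prop}
    {m3 : Z → A → Set Z → Prop} {y3 : Z → Lbl A → Z → Prop}
    {R1 : X → Y → Prop} {R2 : Y → Z → Prop}
    (h1 : IsMIASim O m1 y1 m2 y2 R1) (h2 : IsMIASim O m2 y2 m3 y3 R2) :
    IsMIASim O m1 y1 m3 y3 (fun x z => ∃ y, R1 x y ∧ R2 y z) := by
  rintro r t ⟨s, hrs, hst⟩
  refine ⟨?_, ?_, ?_⟩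
  · intro a T' hT'
    obtain ⟨S', hS', hmap⟩ := (h2 _ _ hst).1 a T' hT'
    obtain ⟨P', hP', hmap'⟩ := (h1 _ _ hrs).1 a S' hS'
    refine ⟨P', hP', fun r' hr' => ?_⟩
    obtain ⟨s', hs', hr's'⟩ := hmap' r' hr'
    obtain ⟨t', ht', hs't'⟩ := hmap s' hs'
    exact ⟨t', ht', s', hr's', hs't'⟩
  · intro a r' ha hmay
    obtain ⟨s', hws, hr'⟩ := (h1 _ _ hrs).2.1 a r' ha hmay
    obtain ⟨t', hwt, hs'⟩ := sim_weakTr h2 hst ha hws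
    exact ⟨t', hwt, s', hr', hs'⟩
  · intro r' hmay
    obtain ⟨s', hws, hr'⟩ := (h1 _ _ hrs).2.2 r' hmay
    obtain ⟨t', hwt, hs'⟩ := sim_weakEps h2 hst hws
    exact ⟨t', hwt, s', hr', hs'⟩

lemma incons_no_common (hR : IsMIA I O mustR mayR)
    {S1 : U → S → Prop} {S2 : U → T → Prop}
    (h1 : IsMIASim O mustR mayR mustP mayP S1)
    (h2 : IsMIASim O mustR mayR mustQ mayQ S2) :
    ∀ x, MIncons I O mustP mayP mustQ mayQ x →
      ∀ p q, x = CState.comb p q → ∀ r, S1 r p → S2 r q → False := by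
  obtain ⟨hdisj, hne, hsyn, -, -, huniq, -⟩ := hR
  intro x hx
  induction hx with
  | @f1 p q o P' hO hm hno =>
    intro p₀ q₀ heq r hp hq
    cases heq
    obtain ⟨Rr, hrm, -⟩ := (h1 _ _ hp).1 o P' hm
    obtain ⟨r', hr'⟩ := hne _ _ _ hrm
    obtain ⟨q', hw, -⟩ := (h2 _ _ hq).2.1 o r' hO (hsyn _ _ _ _ hrm hr')
    exact hno ⟨q', hw⟩
  | @f2 p q o Q' hO hno hm =>
    intro p₀ q₀ heq r hp hq
    cases heq
    obtain ⟨Rr, hrm, -⟩ := (h2 _ _ hq).1 o Q' hm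
    obtain ⟨r', hr'⟩ := hne _ _ _ hrm
    obtain ⟨p', hw, -⟩ := (h1 _ _ hp).2.1 o r' hO (hsyn _ _ _ _ hrm hr')
    exact hno ⟨p', hw⟩
  | @f3 p q a R' hconj hall ih =>
    intro p₀ q₀ heq r hp hq
    cases heq
    cases hconj with
    | omust1 hO hm hw =>
      obtain ⟨Rr, hrm, hmap⟩ := (h1 _ _ hp).1 a _ hm
      obtain ⟨r', hr'⟩ := hne _ _ _ hrm
      obtain ⟨p', hp'P, hS1⟩ := hmap r' hr'
      obtain ⟨q', hwq, hS2⟩ := (h2 _ _ hq).2.1 a r' hO (hsyn _ _ _ _ hrm hr')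
      exact ih _ ⟨p', q', rfl, hp'P, hwq⟩ p' q' rfl r' hS1 hS2
    | omust2 hO hw hm =>
      obtain ⟨Rr, hrm, hmap⟩ := (h2 _ _ hq).1 a _ hm
      obtain ⟨r', hr'⟩ := hne _ _ _ hrm
      obtain ⟨q', hq'Q, hS2⟩ := hmap r' hr'
      obtain ⟨p', hwp, hS1⟩ := (h1 _ _ hp).2.1 a r' hO (hsyn _ _ _ _ hrm hr')
      exact ih _ ⟨p', q', rfl, hwp, hq'Q⟩ p' q' rfl r' hS1 hS2
    | imust1 hI hm hn =>
      obtain ⟨Rr, hrm, hmap⟩ := (h1 _ _ hp).1 a _ hm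
      obtain ⟨r', hr'⟩ := hne _ _ _ hrm
      obtain ⟨p', hp'P, -⟩ := hmap r' hr'
      exact not_incons_left p' (hall _ ⟨p', hp'P, rfl⟩)
    | imust2 hI hn hm =>
      obtain ⟨Rr, hrm, hmap⟩ := (h2 _ _ hq).1 a _ hm
      obtain ⟨r', hr'⟩ := hne _ _ _ hrm
      obtain ⟨q', hq'Q, -⟩ := hmap r' hr'
      exact not_incons_right q' (hall _ ⟨q', hq'Q, rfl⟩)
    | imust3 hI hmP hmQ =>
      obtain ⟨Rr1, hrm1, hmap1⟩ := (h1 _ _ hp).1 a _ hmP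
      obtain ⟨Rr2, hrm2, hmap2⟩ := (h2 _ _ hq).1 a _ hmQ
      have he : Rr1 = Rr2 := huniq _ _ _ _ hI hrm1 hrm2
      subst he
      obtain ⟨r', hr'⟩ := hne _ _ _ hrm1
      obtain ⟨p', hp'P, hS1⟩ := hmap1 r' hr'
      obtain ⟨q', hq'Q, hS2⟩ := hmap2 r' hr'
      exact ih _ ⟨p', q', rfl, hp'P, hq'Q⟩ p' q' rfl r' hS1 hS2

def RelA (I O : Set A) (mustP : S → A → Set S → Prop) (mayP : S → Lbl A → S → Prop)
    (mustQ : T → A → Set T → Prop) (mayQ : T → Lbl A → T → Prop) :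
    CState S T → S → Prop := fun x s =>
  match x with
  | .left p => s = p
  | .right _ => False
  | .comb p q => s = p ∧ ¬ MIncons I O mustP mayP mustQ mayQ (CState.comb p q)

def RelB (I O : Set A) (mustP : S → A → Set S → Prop) (mayP : S → Lbl A → S → Prop)
    (mustQ : T → A → Set T → Prop) (mayQ : T → Lbl A → T → Prop) :
    CState S T → T → Prop := fun x t =>
  match x with
  | .left _ => False
  | .right q => t = q
  | .comb p q => t = q ∧ ¬ MIncons I O mustP mayP mustQ mayQ (CState.comb p q)

lemma simA (hP : IsMIA I O mustP mayP) (hQ : IsMIA I O mustQ mayQ) :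
    IsMIASim O (MAndMust I O mustP mayP mustQ mayQ) (MAndMay I O mustP mayP mustQ mayQ)
      mustP mayP (RelA I O mustP mayP mustQ mayQ) := by
  obtain ⟨hdisj, hPne, hPsyn, hPml, hPmayl, hPuniq, hPmm⟩ := hP
  intro x s hxs
  cases x with
  | left p =>
    obtain rfl : s = p := hxs
    refine ⟨?_, ?_, ?_⟩
    · intro a P' hm
      refine ⟨_, ⟨not_incons_left _, _, MConjMust.fromP hm, rfl⟩, ?_⟩
      rintro x ⟨⟨p', hp', rfl⟩, -⟩
      exact ⟨p', hp', rfl⟩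
    · rintro o x' ho ⟨-, -, hc⟩
      cases hc with
      | fromP h => exact ⟨_, weakTr_of_step h, rfl⟩
    · rintro x' ⟨-, -, hc⟩
      cases hc with
      | fromP h => exact ⟨_, Relation.ReflTransGen.single h, rfl⟩
  | right q => exact hxs.elim
  | comb p q =>
    obtain ⟨rfl, hcons⟩ := hxs
    refine ⟨?_, ?_, ?_⟩
    · intro a P' hm
      rcases hPml _ _ _ hm with hI | hO
      · by_cases hq : ∃ Q', mustQ q a Q'
        · obtain ⟨Q', hQ'⟩ := hq
          refine ⟨_, ⟨hcons, _, MConjMust.imust3 hI hm hQ', rfl⟩, ?_⟩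
          rintro x ⟨⟨p', q', rfl, hp', hq'⟩, hxc⟩
          exact ⟨p', hp', rfl, hxc⟩
        · refine ⟨_, ⟨hcons, _, MConjMust.imust1 hI hm hq, rfl⟩, ?_⟩
          rintro x ⟨⟨p', hp', rfl⟩, -⟩
          exact ⟨p', hp', rfl⟩
      · have hwq : ∃ q', WeakTr mayQ q (some a) q' := by
          by_contra hn
          exact hcons (MIncons.f1 hO hm hn)
        refine ⟨_, ⟨hcons, _, MConjMust.omust1 hO hm hwq, rfl⟩, ?_⟩
        rintro x ⟨⟨p', q', rfl, hp', hq'⟩, hxc⟩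
        exact ⟨p', hp', rfl, hxc⟩
    · rintro o x' ho ⟨-, hxc, hc⟩
      cases hc with
      | may3 hα hwp hwq => exact ⟨_, hwp, rfl, hxc⟩
      | imay1 hI _ _ => exact (Set.disjoint_left.mp hdisj hI ho).elim
      | imay2 hI _ _ => exact (Set.disjoint_left.mp hdisj hI ho).elim
      | imay3 hI _ _ => exact (Set.disjoint_left.mp hdisj hI ho).elim
    · rintro x' ⟨-, hxc, hc⟩
      cases hc with
      | may1 hw => exact ⟨_, weakEps_of_none hw, rfl, hxc⟩
      | may2 hw => exact ⟨_, Relation.ReflTransGen.refl, rfl, hxc⟩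
      | may3 hα hwp hwq => exact ⟨_, weakEps_of_none hwp, rfl, hxc⟩

lemma simB (hP : IsMIA I O mustP mayP) (hQ : IsMIA I O mustQ mayQ) :
    IsMIASim O (MAndMust I O mustP mayP mustQ mayQ) (MAndMay I O mustP mayP mustQ mayQ)
      mustQ mayQ (RelB I O mustP mayP mustQ mayQ) := by
  obtain ⟨hdisj, hQne, hQsyn, hQml, hQmayl, hQuniq, hQmm⟩ := hQ
  intro x t hxt
  cases x with
  | left p => exact hxt.elim
  | right q =>
    obtain rfl : t = q := hxt
    refine ⟨?_, ?_, ?_⟩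
    · intro a Q' hm
      refine ⟨_, ⟨not_incons_right _, _, MConjMust.fromQ hm, rfl⟩, ?_⟩
      rintro x ⟨⟨q', hq', rfl⟩, -⟩
      exact ⟨q', hq', rfl⟩
    · rintro o x' ho ⟨-, -, hc⟩
      cases hc with
      | fromQ h => exact ⟨_, weakTr_of_step h, rfl⟩
    · rintro x' ⟨-, -, hc⟩
      cases hc with
      | fromQ h => exact ⟨_, Relation.ReflTransGen.single h, rfl⟩
  | comb p q =>
    obtain ⟨rfl, hcons⟩ := hxt
    refine ⟨?_, ?_, ?_⟩
    · intro a Q' hm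
      rcases hQml _ _ _ hm with hI | hO
      · by_cases hp : ∃ P', mustP p a P'
        · obtain ⟨P', hP'⟩ := hp
          refine ⟨_, ⟨hcons, _, MConjMust.imust3 hI hP' hm, rfl⟩, ?_⟩
          rintro x ⟨⟨p', q', rfl, hp', hq'⟩, hxc⟩
          exact ⟨q', hq', rfl, hxc⟩
        · refine ⟨_, ⟨hcons, _, MConjMust.imust2 hI hp hm, rfl⟩, ?_⟩
          rintro x ⟨⟨q', hq', rfl⟩, -⟩
          exact ⟨q', hq', rfl⟩
      · have hwp : ∃ p', WeakTr mayP p (some a) p' := by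
          by_contra hn
          exact hcons (MIncons.f2 hO hn hm)
        refine ⟨_, ⟨hcons, _, MConjMust.omust2 hO hwp hm, rfl⟩, ?_⟩
        rintro x ⟨⟨p', q', rfl, hp', hq'⟩, hxc⟩
        exact ⟨q', hq', rfl, hxc⟩
    · rintro o x' ho ⟨-, hxc, hc⟩
      cases hc with
      | may3 hα hwp hwq => exact ⟨_, hwq, rfl, hxc⟩
      | imay1 hI _ _ => exact (Set.disjoint_left.mp hdisj hI ho).elim
      | imay2 hI _ _ => exact (Set.disjoint_left.mp hdisj hI ho).elim
      | imay3 hI _ _ => exact (Set.disjoint_left.mp hdisj hI ho).elim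
    · rintro x' ⟨-, hxc, hc⟩
      cases hc with
      | may1 hw => exact ⟨_, Relation.ReflTransGen.refl, rfl, hxc⟩
      | may2 hw => exact ⟨_, weakEps_of_none hw, rfl, hxc⟩
      | may3 hα hwp hwq => exact ⟨_, weakEps_of_none hwq, rfl, hxc⟩

lemma conjMust_unique (hdisj : Disjoint I O)
    (hPuniq : ∀ s i S' S'', i ∈ I → mustP s i S' → mustP s i S'' → S' = S'')
    (hQuniq : ∀ s i S' S'', i ∈ I → mustQ s i S' → mustQ s i S'' → S' = S'')
    {s : CState S T} {i : A} {R₁' R₂' : Set (CState S T)} (hI : i ∈ I)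
    (h1 : MConjMust I O mustP mayP mustQ mayQ s i R₁')
    (h2 : MConjMust I O mustP mayP mustQ mayQ s i R₂') : R₁' = R₂' := by
  have hnotO : i ∉ O := fun hO => Set.disjoint_left.mp hdisj hI hO
  cases h1 with
  | fromP hm1 =>
    cases h2 with
    | fromP hm2 => rw [hPuniq _ _ _ _ hI hm1 hm2]
  | fromQ hm1 =>
    cases h2 with
    | fromQ hm2 => rw [hQuniq _ _ _ _ hI hm1 hm2]
  | omust1 hO _ _ => exact absurd hO hnotO
  | omust2 hO _ _ => exact absurd hO hnotO
  | imust1 _ hm1 hn1 =>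
    cases h2 with
    | omust1 hO _ _ => exact absurd hO hnotO
    | omust2 hO _ _ => exact absurd hO hnotO
    | imust1 _ hm2 _ => rw [hPuniq _ _ _ _ hI hm1 hm2]
    | imust2 _ hn2 _ => exact absurd ⟨_, hm1⟩ hn2
    | imust3 _ _ hm2 => exact absurd ⟨_, hm2⟩ hn1
  | imust2 _ hn1 hm1 =>
    cases h2 with
    | omust1 hO _ _ => exact absurd hO hnotO
    | omust2 hO _ _ => exact absurd hO hnotO
    | imust1 _ hm2 _ => exact absurd ⟨_, hm2⟩ hn1
    | imust2 _ _ hm2 => rw [hQuniq _ _ _ _ hI hm1 hm2]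
    | imust3 _ hm2 _ => exact absurd ⟨_, hm2⟩ hn1
  | imust3 _ hm1 hm1' =>
    cases h2 with
    | omust1 hO _ _ => exact absurd hO hnotO
    | omust2 hO _ _ => exact absurd hO hnotO
    | imust1 _ _ hn2 => exact absurd ⟨_, hm1'⟩ hn2
    | imust2 _ hn2 _ => exact absurd ⟨_, hm1⟩ hn2
    | imust3 _ hm2 hm2' =>
      rw [hPuniq _ _ _ _ hI hm1 hm2, hQuniq _ _ _ _ hI hm1' hm2']

lemma isMIA_and (hP : IsMIA I O mustP mayP) (hQ : IsMIA I O mustQ mayQ) :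
    IsMIA I O (MAndMust I O mustP mayP mustQ mayQ) (MAndMay I O mustP mayP mustQ mayQ) := by
  obtain ⟨hdisj, hPne, hPsyn, hPml, hPmayl, hPuniq, hPmm⟩ := hP
  obtain ⟨-, hQne, hQsyn, hQml, hQmayl, hQuniq, hQmm⟩ := hQ
  refine ⟨hdisj, ?_, ?_, ?_, ?_, ?_, ?_⟩
  · -- nonempty targets
    rintro s a R'' ⟨hcons, R', hconj, rfl⟩
    by_contra hemp
    have hall : ∀ x ∈ R', MIncons I O mustP mayP mustQ mayQ x := by
      intro x hx
      by_contra hnx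
      exact hemp ⟨x, hx, hnx⟩
    cases hconj with
    | fromP hm =>
      obtain ⟨p', hp'⟩ := hPne _ _ _ hm
      exact not_incons_left p' (hall _ ⟨p', hp', rfl⟩)
    | fromQ hm =>
      obtain ⟨q', hq'⟩ := hQne _ _ _ hm
      exact not_incons_right q' (hall _ ⟨q', hq', rfl⟩)
    | omust1 hO hm hw => exact hcons (MIncons.f3 (MConjMust.omust1 hO hm hw) hall)
    | omust2 hO hw hm => exact hcons (MIncons.f3 (MConjMust.omust2 hO hw hm) hall)
    | imust1 hI hm hn => exact hcons (MIncons.f3 (MConjMust.imust1 hI hm hn) hall)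
    | imust2 hI hn hm => exact hcons (MIncons.f3 (MConjMust.imust2 hI hn hm) hall)
    | imust3 hI hm hm' => exact hcons (MIncons.f3 (MConjMust.imust3 hI hm hm') hall)
  · -- syntactic consistency
    rintro s a R'' s' ⟨hcons, R', hconj, rfl⟩ ⟨hmem, hscons⟩
    refine ⟨hcons, hscons, ?_⟩
    cases hconj with
    | fromP hm =>
      obtain ⟨p', hp', rfl⟩ := hmem
      exact MConjMay.fromP (hPsyn _ _ _ _ hm hp')
    | fromQ hm =>
      obtain ⟨q', hq', rfl⟩ := hmem
      exact MConjMay.fromQ (hQsyn _ _ _ _ hm hq')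
    | omust1 hO hm hw =>
      obtain ⟨p', q', rfl, hp', hwq⟩ := hmem
      exact MConjMay.may3 (fun x hx => (Option.some.inj hx) ▸ hO)
        (weakTr_of_step (hPsyn _ _ _ _ hm hp')) hwq
    | omust2 hO hw hm =>
      obtain ⟨p', q', rfl, hwp, hq'⟩ := hmem
      exact MConjMay.may3 (fun x hx => (Option.some.inj hx) ▸ hO)
        hwp (weakTr_of_step (hQsyn _ _ _ _ hm hq'))
    | imust1 hI hm hn =>
      obtain ⟨p', hp', rfl⟩ := hmem
      refine MConjMay.imay1 hI (hPsyn _ _ _ _ hm hp') ?_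
      rintro ⟨q', hq'⟩
      obtain ⟨Q', hQ', -⟩ := hQmm _ _ _ hI hq'
      exact hn ⟨Q', hQ'⟩
    | imust2 hI hn hm =>
      obtain ⟨q', hq', rfl⟩ := hmem
      refine MConjMay.imay2 hI ?_ (hQsyn _ _ _ _ hm hq')
      rintro ⟨p', hp'⟩
      obtain ⟨P', hP', -⟩ := hPmm _ _ _ hI hp'
      exact hn ⟨P', hP'⟩
    | imust3 hI hmP hmQ =>
      obtain ⟨p', q', rfl, hp', hq'⟩ := hmem
      exact MConjMay.imay3 hI (hPsyn _ _ _ _ hmP hp') (hQsyn _ _ _ _ hmQ hq')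
  · -- must labels
    rintro s a R'' ⟨-, R', hconj, -⟩
    cases hconj with
    | fromP hm => exact hPml _ _ _ hm
    | fromQ hm => exact hQml _ _ _ hm
    | omust1 hO _ _ => exact Or.inr hO
    | omust2 hO _ _ => exact Or.inr hO
    | imust1 hI _ _ => exact Or.inl hI
    | imust2 hI _ _ => exact Or.inl hI
    | imust3 hI _ _ => exact Or.inl hI
  · -- may labels
    rintro s a s' ⟨-, -, hc⟩
    cases hc with
    | fromP h => exact hPmayl _ _ _ h
    | fromQ h => exact hQmayl _ _ _ h
    | may3 hα _ _ => exact Or.inr (hα a rfl)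
    | imay1 hI _ _ => exact Or.inl hI
    | imay2 hI _ _ => exact Or.inl hI
    | imay3 hI _ _ => exact Or.inl hI
  · -- unique input musts
    rintro s i R₁'' R₂'' hI ⟨hc1, R₁', hconj1, rfl⟩ ⟨hc2, R₂', hconj2, rfl⟩
    rw [conjMust_unique hdisj hPuniq hQuniq hI hconj1 hconj2]
  · -- input may underlies must
    rintro s i s' hI ⟨hcons, hscons, hc⟩
    cases hc with
    | @fromP p i p' h =>
      obtain ⟨P', hm, hp'⟩ := hPmm _ _ _ hI h
      exact ⟨_, ⟨hcons, _, MConjMust.fromP hm, rfl⟩, ⟨⟨_, hp', rfl⟩, hscons⟩⟩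
    | @fromQ q i q' h =>
      obtain ⟨Q', hm, hq'⟩ := hQmm _ _ _ hI h
      exact ⟨_, ⟨hcons, _, MConjMust.fromQ hm, rfl⟩, ⟨⟨_, hq', rfl⟩, hscons⟩⟩
    | may3 hα _ _ => exact absurd (hα i rfl) (fun hO => Set.disjoint_left.mp hdisj hI hO)
    | @imay1 p q i p' hi h hn =>
      obtain ⟨P', hm, hp'⟩ := hPmm _ _ _ hI h
      have hnq : ¬ ∃ Q', mustQ q i Q' := by
        rintro ⟨Q', hQ'⟩
        obtain ⟨q', hq'⟩ := hQne _ _ _ hQ'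
        exact hn ⟨q', hQsyn _ _ _ _ hQ' hq'⟩
      exact ⟨_, ⟨hcons, _, MConjMust.imust1 hI hm hnq, rfl⟩, ⟨⟨_, hp', rfl⟩, hscons⟩⟩
    | @imay2 p q i q' hi hn h =>
      obtain ⟨Q', hm, hq'⟩ := hQmm _ _ _ hI h
      have hnp : ¬ ∃ P', mustP p i P' := by
        rintro ⟨P', hP'⟩
        obtain ⟨p', hp'⟩ := hPne _ _ _ hP'
        exact hn ⟨p', hPsyn _ _ _ _ hP' hp'⟩
      exact ⟨_, ⟨hcons, _, MConjMust.imust2 hI hnp hm, rfl⟩, ⟨⟨_, hq', rfl⟩, hscons⟩⟩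
    | @imay3 p q i p' q' hi h h' =>
      obtain ⟨P', hm, hp'⟩ := hPmm _ _ _ hI h
      obtain ⟨Q', hm', hq'⟩ := hQmm _ _ _ hI h'
      exact ⟨_, ⟨hcons, _, MConjMust.imust3 hI hm hm', rfl⟩,
        ⟨⟨_, _, rfl, hp', hq'⟩, hscons⟩⟩

def RelC (S1 : U → S → Prop) (S2 : U → T → Prop) : U → CState S T → Prop := fun r x =>
  match x with
  | .left p => S1 r p
  | .right q => S2 r q
  | .comb p q => S1 r p ∧ S2 r q

lemma simC (hR : IsMIA I O mustR mayR) {S1 : U → S → Prop} {S2 : U → T → Prop}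
    (h1 : IsMIASim O mustR mayR mustP mayP S1)
    (h2 : IsMIASim O mustR mayR mustQ mayQ S2) :
    IsMIASim O mustR mayR (MAndMust I O mustP mayP mustQ mayQ)
      (MAndMay I O mustP mayP mustQ mayQ) (RelC S1 S2) := by
  have hcc := incons_no_common hR h1 h2
  obtain ⟨hdisj, hRne, hRsyn, -, -, hRuniq, -⟩ := hR
  intro r x hrx
  cases x with
  | left p =>
    refine ⟨?_, ?_, ?_⟩
    · rintro a R'' ⟨hcons, R', hconj, rfl⟩
      cases hconj with
      | fromP hm =>
        obtain ⟨Rr, hrm, hmap⟩ := (h1 _ _ hrx).1 _ _ hm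
        refine ⟨Rr, hrm, fun r' hr' => ?_⟩
        obtain ⟨p', hp', hS1⟩ := hmap r' hr'
        exact ⟨CState.left p', ⟨⟨p', hp', rfl⟩, not_incons_left p'⟩, hS1⟩
    · intro o r' ho hmay
      obtain ⟨p', hw, hS1⟩ := (h1 _ _ hrx).2.1 o r' ho hmay
      exact ⟨CState.left p', liftL_tr hw, hS1⟩
    · intro r' hmay
      obtain ⟨p', hw, hS1⟩ := (h1 _ _ hrx).2.2 r' hmay
      exact ⟨CState.left p', liftL_eps hw, hS1⟩
  | right q =>
    refine ⟨?_, ?_, ?_⟩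
    · rintro a R'' ⟨hcons, R', hconj, rfl⟩
      cases hconj with
      | fromQ hm =>
        obtain ⟨Rr, hrm, hmap⟩ := (h2 _ _ hrx).1 _ _ hm
        refine ⟨Rr, hrm, fun r' hr' => ?_⟩
        obtain ⟨q', hq', hS2⟩ := hmap r' hr'
        exact ⟨CState.right q', ⟨⟨q', hq', rfl⟩, not_incons_right q'⟩, hS2⟩
    · intro o r' ho hmay
      obtain ⟨q', hw, hS2⟩ := (h2 _ _ hrx).2.1 o r' ho hmay
      exact ⟨CState.right q', liftR_tr hw, hS2⟩
    · intro r' hmay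
      obtain ⟨q', hw, hS2⟩ := (h2 _ _ hrx).2.2 r' hmay
      exact ⟨CState.right q', liftR_eps hw, hS2⟩
  | comb p q =>
    obtain ⟨hp, hq⟩ := hrx
    refine ⟨?_, ?_, ?_⟩
    · rintro a R'' ⟨hcons, R', hconj, rfl⟩
      cases hconj with
      | omust1 hO hm hw =>
        obtain ⟨Rr, hrm, hmap⟩ := (h1 _ _ hp).1 a _ hm
        refine ⟨Rr, hrm, fun r' hr' => ?_⟩
        obtain ⟨p', hp'P, hS1⟩ := hmap r' hr'
        obtain ⟨q', hwq, hS2⟩ := (h2 _ _ hq).2.1 a r' hO (hRsyn _ _ _ _ hrm hr')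
        exact ⟨CState.comb p' q', ⟨⟨p', q', rfl, hp'P, hwq⟩,
          fun hinc => hcc _ hinc p' q' rfl r' hS1 hS2⟩, hS1, hS2⟩
      | omust2 hO hw hm =>
        obtain ⟨Rr, hrm, hmap⟩ := (h2 _ _ hq).1 a _ hm
        refine ⟨Rr, hrm, fun r' hr' => ?_⟩
        obtain ⟨q', hq'Q, hS2⟩ := hmap r' hr'
        obtain ⟨p', hwp, hS1⟩ := (h1 _ _ hp).2.1 a r' hO (hRsyn _ _ _ _ hrm hr')
        exact ⟨CState.comb p' q', ⟨⟨p', q', rfl, hwp, hq'Q⟩,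
          fun hinc => hcc _ hinc p' q' rfl r' hS1 hS2⟩, hS1, hS2⟩
      | imust1 hI hm hn =>
        obtain ⟨Rr, hrm, hmap⟩ := (h1 _ _ hp).1 a _ hm
        refine ⟨Rr, hrm, fun r' hr' => ?_⟩
        obtain ⟨p', hp'P, hS1⟩ := hmap r' hr'
        exact ⟨CState.left p', ⟨⟨p', hp'P, rfl⟩, not_incons_left p'⟩, hS1⟩
      | imust2 hI hn hm =>
        obtain ⟨Rr, hrm, hmap⟩ := (h2 _ _ hq).1 a _ hm
        refine ⟨Rr, hrm, fun r' hr' => ?_⟩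
        obtain ⟨q', hq'Q, hS2⟩ := hmap r' hr'
        exact ⟨CState.right q', ⟨⟨q', hq'Q, rfl⟩, not_incons_right q'⟩, hS2⟩
      | imust3 hI hmP hmQ =>
        obtain ⟨Rr1, hrm1, hmap1⟩ := (h1 _ _ hp).1 a _ hmP
        obtain ⟨Rr2, hrm2, hmap2⟩ := (h2 _ _ hq).1 a _ hmQ
        have he : Rr1 = Rr2 := hRuniq _ _ _ _ hI hrm1 hrm2
        subst he
        refine ⟨Rr1, hrm1, fun r' hr' => ?_⟩
        obtain ⟨p', hp'P, hS1⟩ := hmap1 r' hr'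
        obtain ⟨q', hq'Q, hS2⟩ := hmap2 r' hr'
        exact ⟨CState.comb p' q', ⟨⟨p', q', rfl, hp'P, hq'Q⟩,
          fun hinc => hcc _ hinc p' q' rfl r' hS1 hS2⟩, hS1, hS2⟩
    · intro o r' ho hmay
      obtain ⟨p', hwp, hS1⟩ := (h1 _ _ hp).2.1 o r' ho hmay
      obtain ⟨q', hwq, hS2⟩ := (h2 _ _ hq).2.1 o r' ho hmay
      have hcons : ¬ MIncons I O mustP mayP mustQ mayQ (CState.comb p q) :=
        fun h => hcc _ h p q rfl r hp hq
      have hcons' : ¬ MIncons I O mustP mayP mustQ mayQ (CState.comb p' q') :=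
        fun h => hcc _ h p' q' rfl r' hS1 hS2
      exact ⟨CState.comb p' q',
        ⟨_, Relation.ReflTransGen.refl,
          hcons, hcons', MConjMay.may3 (fun x hx => (Option.some.inj hx) ▸ ho) hwp hwq⟩,
        hS1, hS2⟩
    · intro r' hmay
      obtain ⟨p', hwp, hS1⟩ := (h1 _ _ hp).2.2 r' hmay
      obtain ⟨q', hwq, hS2⟩ := (h2 _ _ hq).2.2 r' hmay
      have hcons : ¬ MIncons I O mustP mayP mustQ mayQ (CState.comb p q) :=
        fun h => hcc _ h p q rfl r hp hq
      have hcons' : ¬ MIncons I O mustP mayP mustQ mayQ (CState.comb p' q') :=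
        fun h => hcc _ h p' q' rfl r' hS1 hS2
      refine ⟨CState.comb p' q', ?_, hS1, hS2⟩
      rcases hwp.cases_tail with heqp | ⟨p₁, hep, hsp⟩
      · rcases hwq.cases_tail with heqq | ⟨q₁, heq, hsq⟩
        · subst heqp; subst heqq; exact Relation.ReflTransGen.refl
        · subst heqp
          exact Relation.ReflTransGen.single
            ⟨hcons, hcons', MConjMay.may2 ⟨q₁, heq, hsq⟩⟩
      · rcases hwq.cases_tail with heqq | ⟨q₁, heq, hsq⟩
        · subst heqq
          exact Relation.ReflTransGen.single
            ⟨hcons, hcons', MConjMay.may1 ⟨p₁, hep, hsp⟩⟩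
        · exact Relation.ReflTransGen.single
            ⟨hcons, hcons', MConjMay.may3 (fun x hx => nomatch hx) ⟨p₁, hep, hsp⟩ ⟨q₁, heq, hsq⟩⟩

end AuxMIA

/-- Theorem 4.7 (`∧` is And for MIA): (i) consistency of `p ∧ q` is equivalent to
the existence of a common implementation; (ii) `∧` is the greatest lower bound
with respect to MIA-refinement. -/
theorem mia_conj_is_and {A S T : Type} (I O : Set A)
    (mustP : S → A → Set S → Prop) (mayP : S → Lbl A → S → Prop)
    (mustQ : T → A → Set T → Prop) (mayQ : T → Lbl A → T → Prop)
    (hP : IsMIA I O mustP mayP) (hQ : IsMIA I O mustQ mayQ) (p : S) (q : T) :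
    ((∃ (U : Type) (mustR : U → A → Set U → Prop) (mayR : U → Lbl A → U → Prop),
        IsMIA I O mustR mayR ∧ ∃ r : U,
          MIARef O mustR mayR mustP mayP r p ∧ MIARef O mustR mayR mustQ mayQ r q) ↔
      ¬ MIncons I O mustP mayP mustQ mayQ (CState.comb p q)) ∧
    (¬ MIncons I O mustP mayP mustQ mayQ (CState.comb p q) →
      ∀ (U : Type) (mustR : U → A → Set U → Prop) (mayR : U → Lbl A → U → Prop),
        IsMIA I O mustR mayR → ∀ r : U,
          ((MIARef O mustR mayR mustP mayP r p ∧ MIARef O mustR mayR mustQ mayQ r q) ↔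
            MIARef O mustR mayR (MAndMust I O mustP mayP mustQ mayQ)
              (MAndMay I O mustP mayP mustQ mayQ) r (CState.comb p q))) := by
  constructor
  · constructor
    · rintro ⟨U, mustR, mayR, hR, r, ⟨S1, hs1, hr1⟩, ⟨S2, hs2, hr2⟩⟩ hinc
      exact incons_no_common hR hs1 hs2 _ hinc p q rfl r hr1 hr2
    · intro hcons
      exact ⟨CState S T, MAndMust I O mustP mayP mustQ mayQ,
        MAndMay I O mustP mayP mustQ mayQ, isMIA_and hP hQ, CState.comb p q,
        ⟨RelA I O mustP mayP mustQ mayQ, simA hP hQ, rfl, hcons⟩,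
        ⟨RelB I O mustP mayP mustQ mayQ, simB hP hQ, rfl, hcons⟩⟩
  · intro hcons U mustR mayR hR r
    constructor
    · rintro ⟨⟨S1, hs1, hr1⟩, ⟨S2, hs2, hr2⟩⟩
      exact ⟨RelC S1 S2, simC hR hs1 hs2, hr1, hr2⟩
    · rintro ⟨S0, hs0, hr0⟩
      constructor
      · exact ⟨fun r s => ∃ x, S0 r x ∧ RelA I O mustP mayP mustQ mayQ x s,
          sim_comp hs0 (simA hP hQ), CState.comb p q, hr0, rfl, hcons⟩
      · exact ⟨fun r t => ∃ x, S0 r x ∧ RelB I O mustP mayP mustQ mayQ x t,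
          sim_comp hs0 (simB hP hQ), CState.comb p q, hr0, rfl, hcons⟩
end

section
/- (Corollary 4.8) MIA-refinement is compositional with respect to MIA-conjunction: for Modal Interface Automata with common input and output alphabets and states p, q, r, if p ⊑_MIA q and p ∧ r is defined, then q ∧ r is defined and p ∧ r ⊑_MIA q ∧ r. -/
/-!
If `R` witnesses `p ⊑_MIA q`, relate a state `p' ∧ r'` of `P & R` to `q' ∧ r'` whenever
`R p' q'`, relate the copies of `P` and `Q` along `R`, the copies of `R` by the identity, and
also `p' ∧ r'` to the copy of `r'`: the last pairs arise when `q'` has no must-transition for an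
input on which `r'` has one. Every must-step of `Q & R` is then matched by a must-step of
`P & R` along this relation, so by induction on the rules (F1)–(F3) inconsistency of `q' ∧ r'`
propagates to `p' ∧ r'`. Hence `q ∧ r` is defined, and restricting the relation to consistent
states of `P & R` gives an MIA-refinement between the pruned conjunctions.
-/

section WeakTransitions

variable {A V W : Type} {r : V → Lbl A → V → Prop} {r' : W → Lbl A → W → Prop}
  {v v' : V} {α : Lbl A}

theorem WeakEps.map (f : V → W) (hf : ∀ v α v', r v α v' → r' (f v) α (f v'))
    (h : WeakEps r v v') : WeakEps r' (f v) (f v') :=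
  Relation.ReflTransGen.lift f (fun _ _ => hf _ none _) _ _ h

theorem WeakTr.map (f : V → W) (hf : ∀ v α v', r v α v' → r' (f v) α (f v'))
    (h : WeakTr r v α v') : WeakTr r' (f v) α (f v') :=
  let ⟨_, hv, hstep⟩ := h
  ⟨_, hv.map f hf, hf _ _ _ hstep⟩

theorem WeakTr.of_step (h : r v α v') : WeakTr r v α v' :=
  ⟨v, .refl, h⟩

theorem WeakTr.weakEps (h : WeakTr r v none v') : WeakEps r v v' :=
  let ⟨_, hv, hstep⟩ := h
  hv.tail hstep

theorem WeakEps.eq_or_weakTr (h : WeakEps r v v') : v' = v ∨ WeakTr r v none v' :=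
  Relation.ReflTransGen.cases_tail h

end WeakTransitions

namespace IsMIASim

variable {A S T : Type} {O : Set A}
  {mustP : S → A → Set S → Prop} {mayP : S → Lbl A → S → Prop}
  {mustQ : T → A → Set T → Prop} {mayQ : T → Lbl A → T → Prop}
  {R : S → T → Prop} {p p' : S} {q : T}

theorem weakEps (hsim : IsMIASim O mustP mayP mustQ mayQ R) (hpq : R p q)
    (h : WeakEps mayP p p') : ∃ q', WeakEps mayQ q q' ∧ R p' q' := by
  induction h with
  | refl => exact ⟨q, .refl, hpq⟩
  | tail _ hstep ih =>
    obtain ⟨q₁, hq₁, hpq₁⟩ := ih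
    obtain ⟨q₂, hq₂, hpq₂⟩ := (hsim _ _ hpq₁).2.2 _ hstep
    exact ⟨q₂, hq₁.trans hq₂, hpq₂⟩

theorem weakTr_some (hsim : IsMIASim O mustP mayP mustQ mayQ R) {o : A} (ho : o ∈ O)
    (hpq : R p q) (h : WeakTr mayP p (some o) p') :
    ∃ q', WeakTr mayQ q (some o) q' ∧ R p' q' := by
  obtain ⟨p₁, hp₁, hstep⟩ := h
  obtain ⟨q₁, hq₁, hpq₁⟩ := hsim.weakEps hpq hp₁
  obtain ⟨q', ⟨q₂, hq₂, hstep'⟩, hpq'⟩ := (hsim _ _ hpq₁).2.1 o _ ho hstep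
  exact ⟨q', ⟨q₂, hq₁.trans hq₂, hstep'⟩, hpq'⟩

end IsMIASim

inductive ConjSimRel {S T U : Type} (R : S → T → Prop) : CState S U → CState T U → Prop
  | comb {p q r} : R p q → ConjSimRel R (.comb p r) (.comb q r)
  | left {p q} : R p q → ConjSimRel R (.left p) (.left q)
  | right {r} : ConjSimRel R (.right r) (.right r)
  | combRight {p r} : ConjSimRel R (.comb p r) (.right r)

section Conjunction

variable {A S T U : Type} {I O : Set A}
  {mustP : S → A → Set S → Prop} {mayP : S → Lbl A → S → Prop}
  {mustQ : T → A → Set T → Prop} {mayQ : T → Lbl A → T → Prop}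
  {mustR : U → A → Set U → Prop} {mayR : U → Lbl A → U → Prop}
  {R : S → T → Prop} {a : A} {α : Lbl A}

theorem MAndMay.left {q q' : T} (h : mayQ q α q') :
    MAndMay I O mustQ mayQ mustR mayR (.left q) α (.left q') :=
  ⟨nofun, nofun, .fromP h⟩

theorem MAndMay.right {r r' : U} (h : mayR r α r') :
    MAndMay I O mustQ mayQ mustR mayR (.right r) α (.right r') :=
  ⟨nofun, nofun, .fromQ h⟩

namespace ConjSimRel

theorem forall_image_left {P' : Set S} {Q' : Set T} (h : ∀ p ∈ P', ∃ q ∈ Q', R p q) :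
    ∀ x ∈ CState.left (T := U) '' P', ∃ y ∈ CState.left '' Q', ConjSimRel R x y := by
  rintro _ ⟨p, hp, rfl⟩
  obtain ⟨q, hq, hpq⟩ := h p hp
  exact ⟨_, ⟨q, hq, rfl⟩, .left hpq⟩

theorem forall_image_comb {P' : Set S} {Q' : Set T} (C : U → Prop)
    (h : ∀ p ∈ P', ∃ q ∈ Q', R p q) :
    ∀ x ∈ {x | ∃ p r, x = CState.comb p r ∧ p ∈ P' ∧ C r},
      ∃ y ∈ {y | ∃ q r, y = CState.comb q r ∧ q ∈ Q' ∧ C r}, ConjSimRel R x y := by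
  rintro _ ⟨p, r, rfl, hp, hr⟩
  obtain ⟨q, hq, hpq⟩ := h p hp
  exact ⟨_, ⟨q, r, rfl, hq, hr⟩, .comb hpq⟩

theorem exists_conjMust_of_mustR {p : S} {r : U} {U' : Set U}
    (hcons : ¬ MIncons I O mustP mayP mustR mayR (.comb p r)) (ha : a ∈ I ∪ O)
    (hr : mustR r a U') :
    ∃ X, MConjMust I O mustP mayP mustR mayR (.comb p r) a X ∧
      ∀ x ∈ X, ∃ y ∈ CState.right '' U', ConjSimRel R x y := by
  rcases ha with hI | hO
  · by_cases hp : ∃ P', mustP p a P'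
    · obtain ⟨P', hp⟩ := hp
      refine ⟨_, .imust3 hI hp hr, ?_⟩
      rintro _ ⟨p', r', rfl, -, hr'⟩
      exact ⟨_, ⟨r', hr', rfl⟩, .combRight⟩
    · refine ⟨_, .imust2 hI hp hr, ?_⟩
      rintro _ ⟨r', hr', rfl⟩
      exact ⟨_, ⟨r', hr', rfl⟩, .right⟩
  · have hp : ∃ p', WeakTr mayP p (some a) p' := by
      by_contra hp
      exact hcons (.f2 hO hp hr)
    refine ⟨_, .omust2 hO hp hr, ?_⟩
    rintro _ ⟨p', r', rfl, -, hr'⟩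
    exact ⟨_, ⟨r', hr', rfl⟩, .combRight⟩

theorem exists_conjMust_comb (hsim : IsMIASim O mustP mayP mustQ mayQ R) {p : S} {q : T}
    {r : U} {Y : Set (CState T U)} (hpq : R p q)
    (hcons : ¬ MIncons I O mustP mayP mustR mayR (.comb p r))
    (h : MConjMust I O mustQ mayQ mustR mayR (.comb q r) a Y) :
    ∃ X, MConjMust I O mustP mayP mustR mayR (.comb p r) a X ∧
      ∀ x ∈ X, ∃ y ∈ Y, ConjSimRel R x y := by
  cases h with
  | omust1 hO hq hr =>
    obtain ⟨P', hp, hP'⟩ := (hsim p q hpq).1 _ _ hq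
    exact ⟨_, .omust1 hO hp hr, forall_image_comb _ hP'⟩
  | omust2 hO _ hr =>
    have hp : ∃ p', WeakTr mayP p (some a) p' := by
      by_contra hp
      exact hcons (.f2 hO hp hr)
    refine ⟨_, .omust2 hO hp hr, ?_⟩
    rintro _ ⟨p', r', rfl, hp', hr'⟩
    obtain ⟨q', hq', hpq'⟩ := hsim.weakTr_some hO hpq hp'
    exact ⟨_, ⟨q', r', rfl, hq', hr'⟩, .comb hpq'⟩
  | imust1 hI hq hr =>
    obtain ⟨P', hp, hP'⟩ := (hsim p q hpq).1 _ _ hq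
    exact ⟨_, .imust1 hI hp hr, forall_image_left hP'⟩
  | imust2 hI _ hr => exact exists_conjMust_of_mustR hcons (Or.inl hI) hr
  | imust3 hI hq hr =>
    obtain ⟨P', hp, hP'⟩ := (hsim p q hpq).1 _ _ hq
    exact ⟨_, .imust3 hI hp hr, forall_image_comb (· ∈ _) hP'⟩

theorem incons (hsim : IsMIASim O mustP mayP mustQ mayQ R) {x : CState S U}
    {y : CState T U} (hxy : ConjSimRel R x y)
    (hy : MIncons I O mustQ mayQ mustR mayR y) : MIncons I O mustP mayP mustR mayR x := by
  induction hy generalizing x with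
  | f1 hO hq hr =>
    cases hxy with | comb hpq =>
    obtain ⟨P', hp, -⟩ := (hsim _ _ hpq).1 _ _ hq
    exact .f1 hO hp hr
  | f2 hO hq hr =>
    cases hxy with | comb hpq =>
    refine .f2 hO (fun ⟨p', hp'⟩ => hq ?_) hr
    obtain ⟨q', hq', -⟩ := hsim.weakTr_some hO hpq hp'
    exact ⟨q', hq'⟩
  | f3 hstep _ ih =>
    cases hxy with | comb hpq =>
    by_contra hcons
    obtain ⟨X, hX, hXY⟩ := exists_conjMust_comb hsim hpq hcons hstep
    refine hcons (.f3 hX fun x' hx' => ?_)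
    obtain ⟨y', hy', hxy'⟩ := hXY x' hx'
    exact ih y' hy' hxy'

theorem exists_conjMust (hsim : IsMIASim O mustP mayP mustQ mayQ R)
    (hlabels : ∀ r a U', mustR r a U' → a ∈ I ∪ O) {x : CState S U} {y : CState T U}
    {Y : Set (CState T U)} (hxy : ConjSimRel R x y)
    (hcons : ¬ MIncons I O mustP mayP mustR mayR x)
    (h : MConjMust I O mustQ mayQ mustR mayR y a Y) :
    ∃ X, MConjMust I O mustP mayP mustR mayR x a X ∧
      ∀ x' ∈ X, ∃ y' ∈ Y, ConjSimRel R x' y' := by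
  cases hxy with
  | comb hpq => exact exists_conjMust_comb hsim hpq hcons h
  | left hpq =>
    cases h with | fromP hq =>
    obtain ⟨P', hp, hP'⟩ := (hsim _ _ hpq).1 _ _ hq
    exact ⟨_, .fromP hp, forall_image_left hP'⟩
  | right =>
    cases h with | fromQ hr =>
    refine ⟨_, .fromQ hr, ?_⟩
    rintro _ ⟨r', hr', rfl⟩
    exact ⟨_, ⟨r', hr', rfl⟩, .right⟩
  | combRight =>
    cases h with | fromQ hr =>
    exact exists_conjMust_of_mustR hcons (hlabels _ _ _ hr) hr

theorem andMay (hsim : IsMIASim O mustP mayP mustQ mayQ R) {x x' : CState S U}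
    {y y' : CState T U} (hxy : ConjSimRel R x y) (hxy' : ConjSimRel R x' y')
    (hx : ¬ MIncons I O mustP mayP mustR mayR x) (hx' : ¬ MIncons I O mustP mayP mustR mayR x')
    (h : MConjMay I O mayQ mayR y α y') : MAndMay I O mustQ mayQ mustR mayR y α y' :=
  ⟨fun hy => hx (hxy.incons hsim hy), fun hy' => hx' (hxy'.incons hsim hy'), h⟩

theorem weakTr_some (hsim : IsMIASim O mustP mayP mustQ mayQ R) (hIO : Disjoint I O)
    {x x' : CState S U} {y : CState T U} {o : A} (hxy : ConjSimRel R x y) (ho : o ∈ O)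
    (h : MAndMay I O mustP mayP mustR mayR x (some o) x') :
    ∃ y', WeakTr (MAndMay I O mustQ mayQ mustR mayR) y (some o) y' ∧ ConjSimRel R x' y' := by
  obtain ⟨hx, hx', h⟩ := h
  have hoI : o ∉ I := Set.disjoint_right.1 hIO ho
  cases hxy with
  | left hpq =>
    cases h with | fromP hp =>
    obtain ⟨q', hq', hpq'⟩ := (hsim _ _ hpq).2.1 o _ ho hp
    exact ⟨_, hq'.map _ fun _ _ _ => MAndMay.left, .left hpq'⟩
  | right =>
    cases h with | fromQ hr =>
    exact ⟨_, .of_step (MAndMay.right hr), .right⟩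
  | combRight =>
    cases h with
    | may3 _ _ hr => exact ⟨_, hr.map _ fun _ _ _ => MAndMay.right, .combRight⟩
    | imay1 hI | imay2 hI | imay3 hI => exact absurd hI hoI
  | comb hpq =>
    cases h with
    | may3 hα hp hr =>
      obtain ⟨q', hq', hpq'⟩ := hsim.weakTr_some ho hpq hp
      exact ⟨_, .of_step (andMay hsim (.comb hpq) (.comb hpq') hx hx' (.may3 hα hq' hr)),
        .comb hpq'⟩
    | imay1 hI | imay2 hI | imay3 hI => exact absurd hI hoI

theorem weakEps (hsim : IsMIASim O mustP mayP mustQ mayQ R) {x x' : CState S U}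
    {y : CState T U} (hxy : ConjSimRel R x y)
    (h : MAndMay I O mustP mayP mustR mayR x none x') :
    ∃ y', WeakEps (MAndMay I O mustQ mayQ mustR mayR) y y' ∧ ConjSimRel R x' y' := by
  obtain ⟨hx, hx', h⟩ := h
  cases hxy with
  | left hpq =>
    cases h with | fromP hp =>
    obtain ⟨q', hq', hpq'⟩ := (hsim _ _ hpq).2.2 _ hp
    exact ⟨_, hq'.map _ fun _ _ _ => MAndMay.left, .left hpq'⟩
  | right =>
    cases h with | fromQ hr =>
    exact ⟨_, .single (MAndMay.right hr), .right⟩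
  | combRight =>
    cases h with
    | may1 => exact ⟨_, .refl, .combRight⟩
    | may2 hr | may3 _ _ hr =>
      exact ⟨_, hr.weakEps.map _ fun _ _ _ => MAndMay.right, .combRight⟩
  | comb hpq =>
    have step {x' y'} (hxy' : ConjSimRel R x' y') (hx' : ¬ MIncons I O mustP mayP mustR mayR x')
        (h : MConjMay I O mayQ mayR (.comb _ _) none y') :
        WeakEps (MAndMay I O mustQ mayQ mustR mayR) (.comb _ _) y' :=
      .single (andMay hsim (.comb hpq) hxy' hx hx' h)
    cases h with
    | may1 hp =>
      obtain ⟨q', hq', hpq'⟩ := hsim.weakEps hpq hp.weakEps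
      rcases hq'.eq_or_weakTr with rfl | hq'
      · exact ⟨_, .refl, .comb hpq'⟩
      · exact ⟨_, step (.comb hpq') hx' (.may1 hq'), .comb hpq'⟩
    | may2 hr => exact ⟨_, step (.comb hpq) hx' (.may2 hr), .comb hpq⟩
    | may3 _ hp hr =>
      obtain ⟨q', hq', hpq'⟩ := hsim.weakEps hpq hp.weakEps
      rcases hq'.eq_or_weakTr with rfl | hq'
      · exact ⟨_, step (.comb hpq') hx' (.may2 hr), .comb hpq'⟩
      · exact ⟨_, step (.comb hpq') hx' (.may3 nofun hq' hr), .comb hpq'⟩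

end ConjSimRel

theorem isMIASim_conj (hsim : IsMIASim O mustP mayP mustQ mayQ R)
    (hlabels : ∀ r a U', mustR r a U' → a ∈ I ∪ O) (hIO : Disjoint I O) :
    IsMIASim O (MAndMust I O mustP mayP mustR mayR) (MAndMay I O mustP mayP mustR mayR)
      (MAndMust I O mustQ mayQ mustR mayR) (MAndMay I O mustQ mayQ mustR mayR)
      (fun x y => ConjSimRel R x y ∧ ¬ MIncons I O mustP mayP mustR mayR x) := by
  rintro x y ⟨hxy, hx⟩
  refine ⟨?_, ?_, ?_⟩
  · rintro a _ ⟨-, Y, hY, rfl⟩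
    obtain ⟨X, hX, hXY⟩ := hxy.exists_conjMust hsim hlabels hx hY
    refine ⟨_, ⟨hx, X, hX, rfl⟩, ?_⟩
    rintro x' ⟨hx', hx'cons⟩
    obtain ⟨y', hy', hxy'⟩ := hXY x' hx'
    exact ⟨y', ⟨hy', fun hy'cons => hx'cons (hxy'.incons hsim hy'cons)⟩, hxy', hx'cons⟩
  · intro o x' ho h
    obtain ⟨y', hy', hxy'⟩ := hxy.weakTr_some hsim hIO ho h
    exact ⟨y', hy', hxy', h.2.1⟩
  · intro x' h
    obtain ⟨y', hy', hxy'⟩ := hxy.weakEps hsim h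
    exact ⟨y', hy', hxy', h.2.1⟩

end Conjunction

theorem mia_conj_compositional_general {A S T U : Type} (I O : Set A)
    (mustP : S → A → Set S → Prop) (mayP : S → Lbl A → S → Prop)
    (mustQ : T → A → Set T → Prop) (mayQ : T → Lbl A → T → Prop)
    (mustR : U → A → Set U → Prop) (mayR : U → Lbl A → U → Prop)
    (hR : IsMIA I O mustR mayR)
    (p : S) (q : T) (r : U)
    (hpq : MIARef O mustP mayP mustQ mayQ p q)
    (hdef : ¬ MIncons I O mustP mayP mustR mayR (CState.comb p r)) :
    ¬ MIncons I O mustQ mayQ mustR mayR (CState.comb q r) ∧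
    MIARef O (MAndMust I O mustP mayP mustR mayR) (MAndMay I O mustP mayP mustR mayR)
      (MAndMust I O mustQ mayQ mustR mayR) (MAndMay I O mustQ mayQ mustR mayR)
      (CState.comb p r) (CState.comb q r) := by
  obtain ⟨R, hsim, hpq⟩ := hpq
  exact ⟨fun h => hdef ((ConjSimRel.comb hpq).incons hsim h),
    _, isMIASim_conj hsim hR.2.2.2.1 hR.1, .comb hpq, hdef⟩

/-- Corollary 4.8: MIA-refinement is compositional w.r.t. MIA-conjunction. -/
theorem mia_conj_compositional {A S T U : Type} (I O : Set A)
    (mustP : S → A → Set S → Prop) (mayP : S → Lbl A → S → Prop)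
    (mustQ : T → A → Set T → Prop) (mayQ : T → Lbl A → T → Prop)
    (mustR : U → A → Set U → Prop) (mayR : U → Lbl A → U → Prop)
    (hP : IsMIA I O mustP mayP) (hQ : IsMIA I O mustQ mayQ) (hR : IsMIA I O mustR mayR)
    (p : S) (q : T) (r : U)
    (hpq : MIARef O mustP mayP mustQ mayQ p q)
    (hdef : ¬ MIncons I O mustP mayP mustR mayR (CState.comb p r)) :
    ¬ MIncons I O mustQ mayQ mustR mayR (CState.comb q r) ∧
    MIARef O (MAndMust I O mustP mayP mustR mayR) (MAndMay I O mustP mayP mustR mayR)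
      (MAndMust I O mustQ mayQ mustR mayR) (MAndMay I O mustQ mayQ mustR mayR)
      (CState.comb p r) (CState.comb q r) :=
  mia_conj_compositional_general I O mustP mayP mustQ mayQ mustR mayR hR p q r hpq hdef
end

section
/- (Theorem 4.9, '∨ is Or' for MIA) Let P, Q and R be Modal Interface Automata with common input and output alphabets and states p, q and r respectively. Then p ∨ q ⊑_MIA r if and only if p ⊑_MIA r and q ⊑_MIA r, where p ∨ q is the state of the MIA-disjunction P ∨ Q corresponding to the pair (p,q). That is, ∨ is the least upper bound with respect to MIA-refinement. -/
/-- Must-transitions of the dMTS-disjunction `P ∨ Q` (rule (Must) plus inherited ones). -/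
inductive OrMust {S T A : Type} (mustP : S → A → Set S → Prop) (mustQ : T → A → Set T → Prop) :
    CState S T → A → Set (CState S T) → Prop
  | fromP {p a P'} : mustP p a P' → OrMust mustP mustQ (CState.left p) a (CState.left '' P')
  | fromQ {q a Q'} : mustQ q a Q' → OrMust mustP mustQ (CState.right q) a (CState.right '' Q')
  | comb {p q a P' Q'} : mustP p a P' → mustQ q a Q' →
      OrMust mustP mustQ (CState.comb p q) a (CState.left '' P' ∪ CState.right '' Q')

/-- May-transitions of the dMTS-disjunction `P ∨ Q` (rules (May1), (May2) plus inherited ones). -/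
inductive OrMay {S T A : Type} (mayP : S → Lbl A → S → Prop) (mayQ : T → Lbl A → T → Prop) :
    CState S T → Lbl A → CState S T → Prop
  | fromP {p α p'} : mayP p α p' → OrMay mayP mayQ (CState.left p) α (CState.left p')
  | fromQ {q α q'} : mayQ q α q' → OrMay mayP mayQ (CState.right q) α (CState.right q')
  | may1 {p q α p'} : mayP p α p' → OrMay mayP mayQ (CState.comb p q) α (CState.left p')
  | may2 {p q α q'} : mayQ q α q' → OrMay mayP mayQ (CState.comb p q) α (CState.right q')

/-- May-transitions of the MIA-disjunction `P ∨ Q` (rules (May1), (May2) plus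
inherited ones); for inputs, the other disjunct must also have the input. -/
inductive MOrMay {S T A : Type} (I : Set A) (mayP : S → Lbl A → S → Prop)
    (mayQ : T → Lbl A → T → Prop) : CState S T → Lbl A → CState S T → Prop
  | fromP {p α p'} : mayP p α p' → MOrMay I mayP mayQ (CState.left p) α (CState.left p')
  | fromQ {q α q'} : mayQ q α q' → MOrMay I mayP mayQ (CState.right q) α (CState.right q')
  | may1 {p q α p'} : mayP p α p' → (∀ i, α = some i → i ∈ I → ∃ q', mayQ q (some i) q') →
      MOrMay I mayP mayQ (CState.comb p q) α (CState.left p')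
  | may2 {p q α q'} : mayQ q α q' → (∀ i, α = some i → i ∈ I → ∃ p', mayP p (some i) p') →
      MOrMay I mayP mayQ (CState.comb p q) α (CState.right q')


/-- Relation on composite states built from component relations. -/
def CombRel {S T U : Type} (R1 : S → U → Prop) (R2 : T → U → Prop) :
    CState S T → U → Prop
  | CState.left p, r => R1 p r
  | CState.right q, r => R2 q r
  | CState.comb p q, r => R1 p r ∧ R2 q r

/-- Theorem 4.9 (`∨` is Or for MIA): MIA-disjunction is the least upper bound
with respect to MIA-refinement. -/
theorem mia_disj_is_or {A S T U : Type} (I O : Set A)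
    (mustP : S → A → Set S → Prop) (mayP : S → Lbl A → S → Prop)
    (mustQ : T → A → Set T → Prop) (mayQ : T → Lbl A → T → Prop)
    (mustR : U → A → Set U → Prop) (mayR : U → Lbl A → U → Prop)
    (hP : IsMIA I O mustP mayP) (hQ : IsMIA I O mustQ mayQ) (hR : IsMIA I O mustR mayR)
    (p : S) (q : T) (r : U) :
    MIARef O (OrMust mustP mustQ) (MOrMay I mayP mayQ) mustR mayR (CState.comb p q) r ↔
      (MIARef O mustP mayP mustR mayR p r ∧ MIARef O mustQ mayQ mustR mayR q r) := by
  obtain ⟨hdisj, -⟩ := hR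
  constructor
  · rintro ⟨Rel, hsim, hpq⟩
    constructor
    · refine ⟨fun p r => Rel (CState.left p) r ∨ ∃ q0, Rel (CState.comb p q0) r, ?_,
        Or.inr ⟨q, hpq⟩⟩
      intro p r hrel
      refine ⟨?_, ?_, ?_⟩
      · intro a Q' hmust
        rcases hrel with h | ⟨q0, h⟩
        · obtain ⟨P'', hm, hmatch⟩ := (hsim _ _ h).1 a Q' hmust
          cases hm with
          | @fromP _ _ P' hP' =>
            refine ⟨P', hP', fun p' hp' => ?_⟩
            obtain ⟨q', hq', hr⟩ := hmatch _ ⟨p', hp', rfl⟩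
            exact ⟨q', hq', Or.inl hr⟩
        · obtain ⟨P'', hm, hmatch⟩ := (hsim _ _ h).1 a Q' hmust
          cases hm with
          | @comb _ _ _ P' Q'' hP' hQ' =>
            refine ⟨P', hP', fun p' hp' => ?_⟩
            obtain ⟨q', hq', hr⟩ := hmatch _ (Or.inl ⟨p', hp', rfl⟩)
            exact ⟨q', hq', Or.inl hr⟩
      · intro a p' haO hmay
        rcases hrel with h | ⟨q0, h⟩
        · obtain ⟨r', hw, hr⟩ := (hsim _ _ h).2.1 a _ haO (MOrMay.fromP hmay)
          exact ⟨r', hw, Or.inl hr⟩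
        · obtain ⟨r', hw, hr⟩ := (hsim _ _ h).2.1 a _ haO
            (MOrMay.may1 hmay (fun i hi hiI => by
              cases hi; exact absurd haO (fun hO => hdisj.ne_of_mem hiI hO rfl)))
          exact ⟨r', hw, Or.inl hr⟩
      · intro p' hmay
        rcases hrel with h | ⟨q0, h⟩
        · obtain ⟨r', hw, hr⟩ := (hsim _ _ h).2.2 _ (MOrMay.fromP hmay)
          exact ⟨r', hw, Or.inl hr⟩
        · obtain ⟨r', hw, hr⟩ := (hsim _ _ h).2.2 _
            (MOrMay.may1 hmay (fun i hi _ => by cases hi))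
          exact ⟨r', hw, Or.inl hr⟩
    · refine ⟨fun q r => Rel (CState.right q) r ∨ ∃ p0, Rel (CState.comb p0 q) r, ?_,
        Or.inr ⟨p, hpq⟩⟩
      intro q r hrel
      refine ⟨?_, ?_, ?_⟩
      · intro a Q' hmust
        rcases hrel with h | ⟨p0, h⟩
        · obtain ⟨P'', hm, hmatch⟩ := (hsim _ _ h).1 a Q' hmust
          cases hm with
          | @fromQ _ _ Q'' hQ' =>
            refine ⟨Q'', hQ', fun q' hq' => ?_⟩
            obtain ⟨r', hr', hr⟩ := hmatch _ ⟨q', hq', rfl⟩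
            exact ⟨r', hr', Or.inl hr⟩
        · obtain ⟨P'', hm, hmatch⟩ := (hsim _ _ h).1 a Q' hmust
          cases hm with
          | @comb _ _ _ P' Q'' hP' hQ' =>
            refine ⟨Q'', hQ', fun q' hq' => ?_⟩
            obtain ⟨r', hr', hr⟩ := hmatch _ (Or.inr ⟨q', hq', rfl⟩)
            exact ⟨r', hr', Or.inl hr⟩
      · intro a q' haO hmay
        rcases hrel with h | ⟨p0, h⟩
        · obtain ⟨r', hw, hr⟩ := (hsim _ _ h).2.1 a _ haO (MOrMay.fromQ hmay)
          exact ⟨r', hw, Or.inl hr⟩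
        · obtain ⟨r', hw, hr⟩ := (hsim _ _ h).2.1 a _ haO
            (MOrMay.may2 hmay (fun i hi hiI => by
              cases hi; exact absurd haO (fun hO => hdisj.ne_of_mem hiI hO rfl)))
          exact ⟨r', hw, Or.inl hr⟩
      · intro q' hmay
        rcases hrel with h | ⟨p0, h⟩
        · obtain ⟨r', hw, hr⟩ := (hsim _ _ h).2.2 _ (MOrMay.fromQ hmay)
          exact ⟨r', hw, Or.inl hr⟩
        · obtain ⟨r', hw, hr⟩ := (hsim _ _ h).2.2 _
            (MOrMay.may2 hmay (fun i hi _ => by cases hi))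
          exact ⟨r', hw, Or.inl hr⟩
  · rintro ⟨⟨R1, hs1, hp⟩, ⟨R2, hs2, hq⟩⟩
    refine ⟨CombRel R1 R2, ?_, ⟨hp, hq⟩⟩
    rintro (p0 | q0 | ⟨p0, q0⟩) r hrel
    · refine ⟨?_, ?_, ?_⟩
      · intro a Q' hmust
        obtain ⟨P', hP', hmatch⟩ := (hs1 _ _ hrel).1 a Q' hmust
        refine ⟨CState.left '' P', OrMust.fromP hP', ?_⟩
        rintro _ ⟨p', hp', rfl⟩
        exact hmatch _ hp'
      · intro a s' haO hmay
        cases hmay with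
        | fromP h => exact (hs1 _ _ hrel).2.1 a _ haO h
      · intro s' hmay
        cases hmay with
        | fromP h => exact (hs1 _ _ hrel).2.2 _ h
    · refine ⟨?_, ?_, ?_⟩
      · intro a Q' hmust
        obtain ⟨Q'', hQ', hmatch⟩ := (hs2 _ _ hrel).1 a Q' hmust
        refine ⟨CState.right '' Q'', OrMust.fromQ hQ', ?_⟩
        rintro _ ⟨q', hq', rfl⟩
        exact hmatch _ hq'
      · intro a s' haO hmay
        cases hmay with
        | fromQ h => exact (hs2 _ _ hrel).2.1 a _ haO h
      · intro s' hmay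
        cases hmay with
        | fromQ h => exact (hs2 _ _ hrel).2.2 _ h
    · obtain ⟨h1, h2⟩ := hrel
      refine ⟨?_, ?_, ?_⟩
      · intro a Q' hmust
        obtain ⟨P', hP', hm1⟩ := (hs1 _ _ h1).1 a Q' hmust
        obtain ⟨Q'', hQ', hm2⟩ := (hs2 _ _ h2).1 a Q' hmust
        refine ⟨CState.left '' P' ∪ CState.right '' Q'', OrMust.comb hP' hQ', ?_⟩
        rintro _ (⟨p', hp', rfl⟩ | ⟨q', hq', rfl⟩)
        · exact hm1 _ hp'
        · exact hm2 _ hq'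
      · intro a s' haO hmay
        cases hmay with
        | may1 h _ => exact (hs1 _ _ h1).2.1 a _ haO h
        | may2 h _ => exact (hs2 _ _ h2).2.1 a _ haO h
      · intro s' hmay
        cases hmay with
        | may1 h _ => exact (hs1 _ _ h1).2.2 _ h
        | may2 h _ => exact (hs2 _ _ h2).2.2 _ h
end

section
/- (Corollary 4.10) MIA-refinement is compositional with respect to MIA-disjunction: for Modal Interface Automata with common input and output alphabets and states p, q, r, if p ⊑_MIA q then p ∨ r ⊑_MIA q ∨ r. -/
/-
A refinement relation `R` between `P` and `Q` extends to `P ∨ R` and `Q ∨ R` by relating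
`p ∨ r` to `q ∨ r`, copies of `p` to copies of `q`, and states of the shared disjunct `R` to
themselves. One extra pair is needed: when `p ∨ r` moves into `P` by a τ-step, the matching
weak τ-move of `q` may be empty, so `p'` must also be related to `q' ∨ r` whenever `R p' q'`.
The input side conditions of (May1)/(May2) never get in the way, since only τ- and
output-moves are matched and inputs and outputs are disjoint.
-/

inductive DisjRel {S T U : Type} (R : S → T → Prop) : CState S U → CState T U → Prop
  | left_left {p q} : R p q → DisjRel R (.left p) (.left q)
  | left_comb {p q r} : R p q → DisjRel R (.left p) (.comb q r)
  | right_right {r} : DisjRel R (.right r) (.right r)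
  | comb_comb {p q r} : R p q → DisjRel R (.comb p r) (.comb q r)

section MOrMay

variable {A T U : Type} {I : Set A} {mayQ : T → Lbl A → T → Prop} {mayR : U → Lbl A → U → Prop}

lemma MOrMay.comb_left {α : Lbl A} {q q' : T} {r : U} (hα : ∀ a, α = some a → a ∉ I)
    (h : mayQ q α q') : MOrMay I mayQ mayR (.comb q r) α (.left q') :=
  .may1 h fun a ha haI => absurd haI (hα a ha)

lemma MOrMay.comb_right {α : Lbl A} {q : T} {r r' : U} (hα : ∀ a, α = some a → a ∉ I)
    (h : mayR r α r') : MOrMay I mayQ mayR (.comb q r) α (.right r') :=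
  .may2 h fun a ha haI => absurd haI (hα a ha)

lemma WeakEps.map_left {q q' : T} (h : WeakEps mayQ q q') :
    WeakEps (MOrMay I mayQ mayR) (.left q) (.left q') :=
  h.lift _ fun _ _ => MOrMay.fromP

lemma WeakTr.map_left {α : Lbl A} {q q' : T} (h : WeakTr mayQ q α q') :
    WeakTr (MOrMay I mayQ mayR) (.left q) α (.left q') :=
  let ⟨_, heps, hstep⟩ := h
  ⟨_, WeakEps.map_left heps, .fromP hstep⟩

lemma WeakEps.eq_or_comb_left {q q' : T} (h : WeakEps mayQ q q') (r : U) :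
    q' = q ∨ WeakEps (MOrMay I mayQ mayR) (.comb q r) (.left q') := by
  rcases h.cases_head with rfl | ⟨q₁, hstep, hrest⟩
  · exact .inl rfl
  · exact .inr (.head (MOrMay.comb_left (by simp) hstep) (WeakEps.map_left hrest))

lemma WeakTr.comb_left {a : A} {q q' : T} (ha : a ∉ I) (h : WeakTr mayQ q (some a) q')
    (r : U) : WeakTr (MOrMay I mayQ mayR) (.comb q r) (some a) (.left q') := by
  obtain ⟨q'', heps, hstep⟩ := h
  rcases heps.eq_or_comb_left r with rfl | hcomb
  · exact ⟨_, .refl, MOrMay.comb_left (by simpa using ha) hstep⟩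
  · exact ⟨_, hcomb, .fromP hstep⟩

end MOrMay

namespace DisjRel

variable {A S T U : Type} {I O : Set A}
  {mustP : S → A → Set S → Prop} {mayP : S → Lbl A → S → Prop}
  {mustQ : T → A → Set T → Prop} {mayQ : T → Lbl A → T → Prop}
  {mustR : U → A → Set U → Prop} {mayR : U → Lbl A → U → Prop}
  {R : S → T → Prop}

lemma image_left {P' : Set S} {Q' : Set T} (hmatch : ∀ p' ∈ P', ∃ q' ∈ Q', R p' q') :
    ∀ x ∈ (CState.left '' P' : Set (CState S U)), ∃ y ∈ (CState.left '' Q' : Set (CState T U)),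
      DisjRel R x y := by
  rintro _ ⟨p', hp', rfl⟩
  obtain ⟨q', hq', hR⟩ := hmatch p' hp'
  exact ⟨_, ⟨q', hq', rfl⟩, .left_left hR⟩

lemma must_match (hsim : IsMIASim O mustP mayP mustQ mayQ R) {x : CState S U}
    {y : CState T U} (hxy : DisjRel R x y) {a : A} {Y' : Set (CState T U)}
    (hmust : OrMust mustQ mustR y a Y') :
    ∃ X', OrMust mustP mustR x a X' ∧ ∀ x' ∈ X', ∃ y' ∈ Y', DisjRel R x' y' := by
  cases hxy with
  | left_left hR =>
    cases hmust with
    | fromP hq =>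
      obtain ⟨P', hp, hmatch⟩ := (hsim _ _ hR).1 a _ hq
      exact ⟨_, .fromP hp, image_left hmatch⟩
  | left_comb hR =>
    cases hmust with
    | comb hq _ =>
      obtain ⟨P', hp, hmatch⟩ := (hsim _ _ hR).1 a _ hq
      refine ⟨_, .fromP hp, fun x hx => ?_⟩
      obtain ⟨y, hy, hxy⟩ := image_left hmatch x hx
      exact ⟨y, .inl hy, hxy⟩
  | right_right =>
    cases hmust with
    | fromQ hr =>
      refine ⟨_, .fromQ hr, ?_⟩
      rintro _ ⟨r', hr', rfl⟩
      exact ⟨_, ⟨r', hr', rfl⟩, .right_right⟩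
  | comb_comb hR =>
    cases hmust with
    | comb hq hr =>
      obtain ⟨P', hp, hmatch⟩ := (hsim _ _ hR).1 a _ hq
      refine ⟨_, .comb hp hr, ?_⟩
      rintro x (hx | ⟨r', hr', rfl⟩)
      · obtain ⟨y, hy, hxy⟩ := image_left hmatch x hx
        exact ⟨y, .inl hy, hxy⟩
      · exact ⟨_, .inr ⟨r', hr', rfl⟩, .right_right⟩

lemma output_match (hdisj : Disjoint I O) (hsim : IsMIASim O mustP mayP mustQ mayQ R)
    {x x' : CState S U} {y : CState T U} (hxy : DisjRel R x y) {a : A} (ha : a ∈ O)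
    (hmay : MOrMay I mayP mayR x (some a) x') :
    ∃ y', WeakTr (MOrMay I mayQ mayR) y (some a) y' ∧ DisjRel R x' y' := by
  have haI : a ∉ I := hdisj.notMem_of_mem_right ha
  cases hxy with
  | left_left hR =>
    cases hmay with
    | fromP hp =>
      obtain ⟨q', hq, hR'⟩ := (hsim _ _ hR).2.1 a _ ha hp
      exact ⟨_, hq.map_left, .left_left hR'⟩
  | left_comb hR =>
    cases hmay with
    | fromP hp =>
      obtain ⟨q', hq, hR'⟩ := (hsim _ _ hR).2.1 a _ ha hp
      exact ⟨_, hq.comb_left haI _, .left_left hR'⟩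
  | right_right =>
    cases hmay with
    | fromQ hr => exact ⟨_, ⟨_, .refl, .fromQ hr⟩, .right_right⟩
  | comb_comb hR =>
    cases hmay with
    | may1 hp _ =>
      obtain ⟨q', hq, hR'⟩ := (hsim _ _ hR).2.1 a _ ha hp
      exact ⟨_, hq.comb_left haI _, .left_left hR'⟩
    | may2 hr _ =>
      exact ⟨_, ⟨_, .refl, MOrMay.comb_right (by simpa using haI) hr⟩, .right_right⟩

lemma tau_match (hsim : IsMIASim O mustP mayP mustQ mayQ R) {x x' : CState S U}
    {y : CState T U} (hxy : DisjRel R x y) (hmay : MOrMay I mayP mayR x none x') :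
    ∃ y', WeakEps (MOrMay I mayQ mayR) y y' ∧ DisjRel R x' y' := by
  cases hxy with
  | left_left hR =>
    cases hmay with
    | fromP hp =>
      obtain ⟨q', hq, hR'⟩ := (hsim _ _ hR).2.2 _ hp
      exact ⟨_, hq.map_left, .left_left hR'⟩
  | @left_comb _ q r hR =>
    cases hmay with
    | fromP hp =>
      obtain ⟨q', hq, hR'⟩ := (hsim _ _ hR).2.2 _ hp
      rcases hq.eq_or_comb_left r with rfl | hcomb
      · exact ⟨_, .refl, .left_comb hR'⟩
      · exact ⟨_, hcomb, .left_left hR'⟩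
  | right_right =>
    cases hmay with
    | fromQ hr => exact ⟨_, .single (.fromQ hr), .right_right⟩
  | @comb_comb _ q r hR =>
    cases hmay with
    | may1 hp _ =>
      obtain ⟨q', hq, hR'⟩ := (hsim _ _ hR).2.2 _ hp
      rcases hq.eq_or_comb_left r with rfl | hcomb
      · exact ⟨_, .refl, .left_comb hR'⟩
      · exact ⟨_, hcomb, .left_left hR'⟩
    | may2 hr _ => exact ⟨_, .single (MOrMay.comb_right (by simp) hr), .right_right⟩

theorem isMIASim (hdisj : Disjoint I O) (hsim : IsMIASim O mustP mayP mustQ mayQ R) :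
    IsMIASim O (OrMust mustP mustR) (MOrMay I mayP mayR) (OrMust mustQ mustR)
      (MOrMay I mayQ mayR) (DisjRel R) := fun _ _ hxy =>
  ⟨fun _ _ => must_match hsim hxy, fun _ _ ha => output_match hdisj hsim hxy ha,
    fun _ => tau_match hsim hxy⟩

end DisjRel

theorem mia_disj_compositional_general {A S T U : Type} (I O : Set A)
    (mustP : S → A → Set S → Prop) (mayP : S → Lbl A → S → Prop)
    (mustQ : T → A → Set T → Prop) (mayQ : T → Lbl A → T → Prop)
    (mustR : U → A → Set U → Prop) (mayR : U → Lbl A → U → Prop)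
    (hQ : IsMIA I O mustQ mayQ)
    (p : S) (q : T) (r : U)
    (hpq : MIARef O mustP mayP mustQ mayQ p q) :
    MIARef O (OrMust mustP mustR) (MOrMay I mayP mayR)
      (OrMust mustQ mustR) (MOrMay I mayQ mayR)
      (CState.comb p r) (CState.comb q r) := by
  obtain ⟨R, hsim, hpq⟩ := hpq
  exact ⟨DisjRel R, DisjRel.isMIASim hQ.1 hsim, .comb_comb hpq⟩

/-- Corollary 4.10: MIA-refinement is compositional w.r.t. MIA-disjunction. -/
theorem mia_disj_compositional {A S T U : Type} (I O : Set A)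
    (mustP : S → A → Set S → Prop) (mayP : S → Lbl A → S → Prop)
    (mustQ : T → A → Set T → Prop) (mayQ : T → Lbl A → T → Prop)
    (mustR : U → A → Set U → Prop) (mayR : U → Lbl A → U → Prop)
    (hP : IsMIA I O mustP mayP) (hQ : IsMIA I O mustQ mayQ) (hR : IsMIA I O mustR mayR)
    (p : S) (q : T) (r : U)
    (hpq : MIARef O mustP mayP mustQ mayQ p q) :
    MIARef O (OrMust mustP mustR) (MOrMay I mayP mayR)
      (OrMust mustQ mustR) (MOrMay I mayQ mayR)
      (CState.comb p r) (CState.comb q r) :=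
  mia_disj_compositional_general I O mustP mayP mustQ mayQ mustR mayR hQ p q r hpq
end

section
/- (Auxiliary result in the proof of Theorem 4.13) Let P₁, P₂, Q₁ be Modal Interface Automata such that Q₁ and P₂ are composable and P₁ has the same alphabets as Q₁. Let E_P be the set of incompatible states of the parallel product P₁ ⊗ P₂ and E_Q that of Q₁ ⊗ P₂. Then for all states p₁ ∈ P₁, q₁ ∈ Q₁, p₂ ∈ P₂: if (p₁,p₂) ∈ E_P and p₁ ⊑_MIA q₁, then (q₁,p₂) ∈ E_Q. -/
/-- Composability of alphabets: each common action is input of one side and output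
of the other, i.e. A₁ ∩ A₂ = (I₁ ∩ O₂) ∪ (O₁ ∩ I₂). -/
def Composable {A : Type} (I1 O1 I2 O2 : Set A) : Prop :=
  (I1 ∪ O1) ∩ (I2 ∪ O2) = (I1 ∩ O2) ∪ (O1 ∩ I2)

/-- Must-transitions of the MIA parallel product `P₁ ⊗ P₂` (rules (Must1), (Must2)). -/
inductive MParMust {S1 S2 A : Type} (A1 A2 : Set A) (must1 : S1 → A → Set S1 → Prop)
    (must2 : S2 → A → Set S2 → Prop) : S1 × S2 → A → Set (S1 × S2) → Prop
  | must1 {p1 p2 a P1'} : must1 p1 a P1' → a ∉ A2 →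
      MParMust A1 A2 must1 must2 (p1, p2) a {x | x.1 ∈ P1' ∧ x.2 = p2}
  | must2 {p1 p2 a P2'} : must2 p2 a P2' → a ∉ A1 →
      MParMust A1 A2 must1 must2 (p1, p2) a {x | x.1 = p1 ∧ x.2 ∈ P2'}

/-- May-transitions of the MIA parallel product `P₁ ⊗ P₂` (rules (May1)-(May3)). -/
inductive MParMay {S1 S2 A : Type} (A1 A2 : Set A) (may1 : S1 → Lbl A → S1 → Prop)
    (may2 : S2 → Lbl A → S2 → Prop) : S1 × S2 → Lbl A → S1 × S2 → Prop
  | may1 {p1 p2 α p1'} : may1 p1 α p1' → (∀ x, α = some x → x ∉ A2) →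
      MParMay A1 A2 may1 may2 (p1, p2) α (p1', p2)
  | may2 {p1 p2 α p2'} : may2 p2 α p2' → (∀ x, α = some x → x ∉ A1) →
      MParMay A1 A2 may1 may2 (p1, p2) α (p1, p2')
  | may3 {p1 p2 a p1' p2'} : may1 p1 (some a) p1' → may2 p2 (some a) p2' →
      MParMay A1 A2 may1 may2 (p1, p2) none (p1', p2')

/-- Error states of the MIA parallel product. -/
def IsErrorMIA {S1 S2 A : Type} (I1 O1 I2 O2 : Set A) (must1 : S1 → A → Set S1 → Prop)
    (may1 : S1 → Lbl A → S1 → Prop) (must2 : S2 → A → Set S2 → Prop)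
    (may2 : S2 → Lbl A → S2 → Prop) (s : S1 × S2) : Prop :=
  ∃ a, a ∈ (I1 ∪ O1) ∩ (I2 ∪ O2) ∧
    ((a ∈ O1 ∧ (∃ p', may1 s.1 (some a) p') ∧ ¬ (∃ P', must2 s.2 a P')) ∨
     (a ∈ O2 ∧ (∃ p', may2 s.2 (some a) p') ∧ ¬ (∃ P', must1 s.1 a P')))

/-- Incompatible states of the MIA parallel product: the least set containing all
error states and closed backwards under output- or τ-may-transitions. -/
inductive MIAIncompat {S1 S2 A : Type} (I1 O1 I2 O2 : Set A) (must1 : S1 → A → Set S1 → Prop)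
    (may1 : S1 → Lbl A → S1 → Prop) (must2 : S2 → A → Set S2 → Prop)
    (may2 : S2 → Lbl A → S2 → Prop) : S1 × S2 → Prop
  | err {s} : IsErrorMIA I1 O1 I2 O2 must1 may1 must2 may2 s →
      MIAIncompat I1 O1 I2 O2 must1 may1 must2 may2 s
  | stepTau {s s'} : MParMay (I1 ∪ O1) (I2 ∪ O2) may1 may2 s none s' →
      MIAIncompat I1 O1 I2 O2 must1 may1 must2 may2 s' →
      MIAIncompat I1 O1 I2 O2 must1 may1 must2 may2 s
  | stepOut {s a s'} : a ∈ (O1 ∪ O2) \ (I1 ∪ I2) →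
      MParMay (I1 ∪ O1) (I2 ∪ O2) may1 may2 s (some a) s' →
      MIAIncompat I1 O1 I2 O2 must1 may1 must2 may2 s' →
      MIAIncompat I1 O1 I2 O2 must1 may1 must2 may2 s

/-- Must-transitions of the MIA parallel composition `P₁ | P₂` (pruned product). -/
def MIAParMust {S1 S2 A : Type} (I1 O1 I2 O2 : Set A) (must1 : S1 → A → Set S1 → Prop)
    (may1 : S1 → Lbl A → S1 → Prop) (must2 : S2 → A → Set S2 → Prop)
    (may2 : S2 → Lbl A → S2 → Prop) (s : S1 × S2) (a : A) (T' : Set (S1 × S2)) : Prop :=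
  MParMust (I1 ∪ O1) (I2 ∪ O2) must1 must2 s a T' ∧
  ¬ MIAIncompat I1 O1 I2 O2 must1 may1 must2 may2 s ∧
  ∀ t ∈ T', ¬ MIAIncompat I1 O1 I2 O2 must1 may1 must2 may2 t

/-- May-transitions of the MIA parallel composition `P₁ | P₂` (pruned product;
may-transitions underlying a removed must-transition are deleted, too). -/
def MIAParMay {S1 S2 A : Type} (I1 O1 I2 O2 : Set A) (must1 : S1 → A → Set S1 → Prop)
    (may1 : S1 → Lbl A → S1 → Prop) (must2 : S2 → A → Set S2 → Prop)
    (may2 : S2 → Lbl A → S2 → Prop) (s : S1 × S2) (α : Lbl A) (s' : S1 × S2) : Prop :=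
  MParMay (I1 ∪ O1) (I2 ∪ O2) may1 may2 s α s' ∧
  ¬ MIAIncompat I1 O1 I2 O2 must1 may1 must2 may2 s ∧
  ¬ MIAIncompat I1 O1 I2 O2 must1 may1 must2 may2 s' ∧
  ¬ (∃ a T', α = some a ∧ MParMust (I1 ∪ O1) (I2 ∪ O2) must1 must2 s a T' ∧ s' ∈ T' ∧
      ∃ t ∈ T', MIAIncompat I1 O1 I2 O2 must1 may1 must2 may2 t)


private lemma mia_eps_lift {A S2 T1 : Type} (I1 O1 I2 O2 : Set A)
    (mustQ1 : T1 → A → Set T1 → Prop) (mayQ1 : T1 → Lbl A → T1 → Prop)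
    (mustP2 : S2 → A → Set S2 → Prop) (mayP2 : S2 → Lbl A → S2 → Prop)
    {q q' : T1} (p2 : S2) (h : WeakEps mayQ1 q q')
    (hinc : MIAIncompat I1 O1 I2 O2 mustQ1 mayQ1 mustP2 mayP2 (q', p2)) :
    MIAIncompat I1 O1 I2 O2 mustQ1 mayQ1 mustP2 mayP2 (q, p2) := by
  induction h using Relation.ReflTransGen.head_induction_on with
  | refl => exact hinc
  | head hstep _ ih =>
      exact .stepTau (MParMay.may1 hstep (fun x hx => nomatch hx)) ih

private lemma mia_aux {A S1 S2 T1 : Type} (I1 O1 I2 O2 : Set A)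
    (mustP1 : S1 → A → Set S1 → Prop) (mayP1 : S1 → Lbl A → S1 → Prop)
    (mustP2 : S2 → A → Set S2 → Prop) (mayP2 : S2 → Lbl A → S2 → Prop)
    (mustQ1 : T1 → A → Set T1 → Prop) (mayQ1 : T1 → Lbl A → T1 → Prop)
    (hP1 : IsMIA I1 O1 mustP1 mayP1) (hP2 : IsMIA I2 O2 mustP2 mayP2)
    (hQ1 : IsMIA I1 O1 mustQ1 mayQ1)
    (hcomp : Composable I1 O1 I2 O2)
    (R : S1 → T1 → Prop) (hR : IsMIASim O1 mustP1 mayP1 mustQ1 mayQ1 R) :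
    ∀ s : S1 × S2, MIAIncompat I1 O1 I2 O2 mustP1 mayP1 mustP2 mayP2 s →
      ∀ q1, R s.1 q1 → MIAIncompat I1 O1 I2 O2 mustQ1 mayQ1 mustP2 mayP2 (q1, s.2) := by
  obtain ⟨hdisj1, hne1, hcons1, hmustl1, hmayl1, hdet1, hinmay1⟩ := hP1
  obtain ⟨hdisjQ, hneQ, hconsQ, hmustlQ, hmaylQ, hdetQ, hinmayQ⟩ := hQ1
  intro s hinc
  induction hinc with
  | @err s herr =>
      intro q1 hq
      obtain ⟨a, hmem, hcase⟩ := herr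
      rcases hcase with ⟨haO1, ⟨p', hmay⟩, hnomust⟩ | ⟨haO2, hmay2, hnomust⟩
      · obtain ⟨q1', ⟨q1'', heps, hstepa⟩, _⟩ := (hR s.1 q1 hq).2.1 a p' haO1 hmay
        exact mia_eps_lift I1 O1 I2 O2 mustQ1 mayQ1 mustP2 mayP2 s.2 heps
          (.err ⟨a, hmem, Or.inl ⟨haO1, ⟨q1', hstepa⟩, hnomust⟩⟩)
      · refine .err ⟨a, hmem, Or.inr ⟨haO2, hmay2, ?_⟩⟩
        rintro ⟨Q', hQ⟩
        obtain ⟨P', hP, _⟩ := (hR s.1 q1 hq).1 a Q' hQ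
        exact hnomust ⟨P', hP⟩
  | @stepTau s s' hstep hinc ih =>
      cases hstep with
      | @may1 p1 p2 α p1' h1 _ =>
          intro q1 hq
          obtain ⟨q1', heps, hq'⟩ := (hR p1 q1 hq).2.2 p1' h1
          exact mia_eps_lift I1 O1 I2 O2 mustQ1 mayQ1 mustP2 mayP2 p2 heps (ih q1' hq')
      | @may2 p1 p2 α p2' h2 _ =>
          intro q1 hq
          exact .stepTau (MParMay.may2 h2 (fun x hx => nomatch hx)) (ih q1 hq)
      | @may3 p1 p2 a p1' p2' h1 h2 =>
          intro q1 hq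
          have hA1 : a ∈ I1 ∪ O1 := hmayl1 p1 a p1' h1
          have hA2 : a ∈ I2 ∪ O2 := hP2.2.2.2.2.1 p2 a p2' h2
          have hsync : a ∈ (I1 ∩ O2) ∪ (O1 ∩ I2) := hcomp ▸ ⟨hA1, hA2⟩
          rcases hsync with ⟨haI1, haO2⟩ | ⟨haO1, _⟩
          · rcases Classical.em (∃ Q', mustQ1 q1 a Q') with ⟨Q', hQ⟩ | hn
            · obtain ⟨P', hPmust, hmatch⟩ := (hR p1 q1 hq).1 a Q' hQ
              obtain ⟨S', hS, hmemS⟩ := hinmay1 p1 a p1' haI1 h1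
              have hSP : S' = P' := hdet1 p1 a S' P' haI1 hS hPmust
              obtain ⟨q1', hq1'Q, hR'⟩ := hmatch p1' (hSP ▸ hmemS)
              have hmayq : mayQ1 q1 (some a) q1' := hconsQ q1 a Q' q1' hQ hq1'Q
              exact .stepTau (MParMay.may3 hmayq h2) (ih q1' hR')
            · exact .err ⟨a, ⟨hA1, hA2⟩, Or.inr ⟨haO2, ⟨p2', h2⟩, hn⟩⟩
          · obtain ⟨q1', ⟨q1'', heps, hstepa⟩, hR'⟩ := (hR p1 q1 hq).2.1 a p1' haO1 h1
            exact mia_eps_lift I1 O1 I2 O2 mustQ1 mayQ1 mustP2 mayP2 p2 heps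
              (.stepTau (MParMay.may3 hstepa h2) (ih q1' hR'))
  | @stepOut s a s' hmem hstep hinc ih =>
      cases hstep with
      | @may1 p1 p2 α p1' h1 hnA2 =>
          intro q1 hq
          have haO1 : a ∈ O1 := by
            rcases hmem.1 with h | h
            · exact h
            · exact absurd (Or.inr h) (hnA2 a rfl)
          obtain ⟨q1', ⟨q1'', heps, hstepa⟩, hR'⟩ := (hR p1 q1 hq).2.1 a p1' haO1 h1
          exact mia_eps_lift I1 O1 I2 O2 mustQ1 mayQ1 mustP2 mayP2 p2 heps
            (.stepOut hmem (MParMay.may1 hstepa hnA2) (ih q1' hR'))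
      | @may2 p1 p2 α p2' h2 hnA1 =>
          intro q1 hq
          exact .stepOut hmem (MParMay.may2 h2 hnA1) (ih q1 hq)

/-- Auxiliary result in the proof of Theorem 4.13: incompatibility propagates
from refined to refining components in MIA parallel products. -/
theorem mia_par_incompat_mono {A S1 S2 T1 : Type} (I1 O1 I2 O2 : Set A)
    (mustP1 : S1 → A → Set S1 → Prop) (mayP1 : S1 → Lbl A → S1 → Prop)
    (mustP2 : S2 → A → Set S2 → Prop) (mayP2 : S2 → Lbl A → S2 → Prop)
    (mustQ1 : T1 → A → Set T1 → Prop) (mayQ1 : T1 → Lbl A → T1 → Prop)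
    (hP1 : IsMIA I1 O1 mustP1 mayP1) (hP2 : IsMIA I2 O2 mustP2 mayP2)
    (hQ1 : IsMIA I1 O1 mustQ1 mayQ1)
    (hcomp : Composable I1 O1 I2 O2)
    (p1 : S1) (q1 : T1) (p2 : S2)
    (hinc : MIAIncompat I1 O1 I2 O2 mustP1 mayP1 mustP2 mayP2 (p1, p2))
    (href : MIARef O1 mustP1 mayP1 mustQ1 mayQ1 p1 q1) :
    MIAIncompat I1 O1 I2 O2 mustQ1 mayQ1 mustP2 mayP2 (q1, p2) := by
  obtain ⟨R, hRsim, hRpq⟩ := href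
  exact mia_aux I1 O1 I2 O2 mustP1 mayP1 mustP2 mayP2 mustQ1 mayQ1 hP1 hP2 hQ1 hcomp R hRsim
    (p1, p2) hinc q1 hRpq
end

section
/- (Theorem 4.13, Compositionality of MIA-Parallel Composition) Let P₁, P₂ and Q₁ be Modal Interface Automata with states p₁ ∈ P₁, p₂ ∈ P₂, q₁ ∈ Q₁ such that p₁ ⊑_MIA q₁ (in particular P₁ and Q₁ have the same input and output alphabets). Assume Q₁ and P₂ are composable. Then: (a) P₁ and P₂ are composable; and (b) if q₁ and p₂ are compatible, then p₁ and p₂ are compatible and p₁ | p₂ ⊑_MIA q₁ | p₂. -/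
section MIAComp

variable {A S1 S2 T1 : Type} {I1 O1 I2 O2 : Set A}
  {mustP1 : S1 → A → Set S1 → Prop} {mayP1 : S1 → Lbl A → S1 → Prop}
  {mustP2 : S2 → A → Set S2 → Prop} {mayP2 : S2 → Lbl A → S2 → Prop}
  {mustQ1 : T1 → A → Set T1 → Prop} {mayQ1 : T1 → Lbl A → T1 → Prop}

/-- Incompatibility propagates backwards along a weak τ-sequence in the left component. -/
private lemma mia_back_eps {q q' : T1} {p2 : S2}
    (h : WeakEps mayQ1 q q')
    (h' : MIAIncompat I1 O1 I2 O2 mustQ1 mayQ1 mustP2 mayP2 (q', p2)) :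
    MIAIncompat I1 O1 I2 O2 mustQ1 mayQ1 mustP2 mayP2 (q, p2) := by
  induction h using Relation.ReflTransGen.head_induction_on with
  | refl => exact h'
  | head hstep _ ih =>
      exact MIAIncompat.stepTau (MParMay.may1 hstep (fun x hx => nomatch hx)) ih

/-- A weak τ-sequence of the left component lifts to the pruned composition when the
source is compatible. -/
private lemma mia_lift_eps {q q' : T1} {p2 : S2}
    (h : WeakEps mayQ1 q q') :
    ¬ MIAIncompat I1 O1 I2 O2 mustQ1 mayQ1 mustP2 mayP2 (q, p2) →
    WeakEps (MIAParMay I1 O1 I2 O2 mustQ1 mayQ1 mustP2 mayP2) (q, p2) (q', p2) := by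
  induction h using Relation.ReflTransGen.head_induction_on with
  | refl => exact fun _ => Relation.ReflTransGen.refl
  | head hstep _ ih =>
      intro hc
      have hm := MParMay.may1 (A1 := I1 ∪ O1) (A2 := I2 ∪ O2) (may2 := mayP2)
        (p2 := p2) hstep (fun x hx => nomatch hx)
      have hc' : ¬ MIAIncompat I1 O1 I2 O2 mustQ1 mayQ1 mustP2 mayP2 _ :=
        fun h => hc (MIAIncompat.stepTau hm h)
      exact Relation.ReflTransGen.head
        ⟨hm, hc, hc', by rintro ⟨b, T', hb, -⟩; cases hb⟩ (ih hc')

/-- If an output-must-transition of the product has an incompatible target, the source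
is incompatible, too. -/
private lemma mia_must_back
    (hQ1 : IsMIA I1 O1 mustQ1 mayQ1) (hP2 : IsMIA I2 O2 mustP2 mayP2)
    {s t : T1 × S2} {a : A} {T' : Set (T1 × S2)}
    (ha : a ∈ (O1 ∪ O2) \ (I1 ∪ I2))
    (hm : MParMust (I1 ∪ O1) (I2 ∪ O2) mustQ1 mustP2 s a T') (ht : t ∈ T')
    (hi : MIAIncompat I1 O1 I2 O2 mustQ1 mayQ1 mustP2 mayP2 t) :
    MIAIncompat I1 O1 I2 O2 mustQ1 mayQ1 mustP2 mayP2 s := by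
  cases hm with
  | @must1 q1 p2 a Q1' h1 h2 =>
      obtain ⟨t1, t2⟩ := t
      obtain ⟨ht1, ht2⟩ := ht
      dsimp at ht1 ht2
      subst ht2
      have hmay := hQ1.2.2.1 _ _ _ _ h1 ht1
      exact MIAIncompat.stepOut ha
        (MParMay.may1 hmay (fun x hx => by cases hx; exact h2)) hi
  | @must2 q1 p2 a P2' h1 h2 =>
      obtain ⟨t1, t2⟩ := t
      obtain ⟨ht1, ht2⟩ := ht
      dsimp at ht1 ht2
      subst ht1
      have hmay := hP2.2.2.1 _ _ _ _ h1 ht2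
      exact MIAIncompat.stepOut ha
        (MParMay.may2 hmay (fun x hx => by cases hx; exact h2)) hi

/-- Key lemma: incompatibility transfers along a MIA-simulation. -/
private lemma mia_transfer
    (hP1 : IsMIA I1 O1 mustP1 mayP1) (hP2 : IsMIA I2 O2 mustP2 mayP2)
    (hQ1 : IsMIA I1 O1 mustQ1 mayQ1)
    (hcomp : Composable I1 O1 I2 O2)
    {R : S1 → T1 → Prop} (hsim : IsMIASim O1 mustP1 mayP1 mustQ1 mayQ1 R)
    {s : S1 × S2} (hinc : MIAIncompat I1 O1 I2 O2 mustP1 mayP1 mustP2 mayP2 s) :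
    ∀ q, R s.1 q → MIAIncompat I1 O1 I2 O2 mustQ1 mayQ1 mustP2 mayP2 (q, s.2) := by
  induction hinc with
  | @err s herr =>
      intro q hR
      obtain ⟨a, hmem, hcase⟩ := herr
      rcases hcase with ⟨haO1, ⟨p', hmay⟩, hnomust⟩ | ⟨haO2, hmay2, hnomust⟩
      · obtain ⟨q', ⟨q'', heps, hstep⟩, -⟩ := (hsim _ _ hR).2.1 a p' haO1 hmay
        exact mia_back_eps heps
          (MIAIncompat.err ⟨a, hmem, Or.inl ⟨haO1, ⟨q', hstep⟩, hnomust⟩⟩)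
      · refine MIAIncompat.err ⟨a, hmem, Or.inr ⟨haO2, hmay2, ?_⟩⟩
        rintro ⟨Q', hQ'⟩
        obtain ⟨P', hP', -⟩ := (hsim _ _ hR).1 a Q' hQ'
        exact hnomust ⟨P', hP'⟩
  | @stepTau s s' hstep hinc' ih =>
      intro q hR
      cases hstep with
      | may1 h1 h2 =>
          obtain ⟨q', heps, hR'⟩ := (hsim _ _ hR).2.2 _ h1
          exact mia_back_eps heps (ih q' hR')
      | may2 h1 h2 =>
          exact MIAIncompat.stepTau (MParMay.may2 h1 (fun x hx => nomatch hx)) (ih q hR)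
      | @may3 p1 p2 a p1' p2' h1 h2 =>
          have ha1 : a ∈ I1 ∪ O1 := hP1.2.2.2.2.1 _ _ _ h1
          have ha2 : a ∈ I2 ∪ O2 := hP2.2.2.2.2.1 _ _ _ h2
          have hmem : a ∈ (I1 ∩ O2) ∪ (O1 ∩ I2) := by
            rw [← hcomp]; exact ⟨ha1, ha2⟩
          rcases hmem with ⟨haI1, haO2⟩ | ⟨haO1, -⟩
          · by_cases hqm : ∃ Q', mustQ1 q a Q'
            · obtain ⟨Q', hQ'⟩ := hqm
              obtain ⟨P'', hP'', hmatch⟩ := (hsim _ _ hR).1 a Q' hQ'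
              obtain ⟨P', hP', hp'⟩ := hP1.2.2.2.2.2.2 _ _ _ haI1 h1
              have hEq := hP1.2.2.2.2.2.1 _ _ _ _ haI1 hP' hP''
              subst hEq
              obtain ⟨q', hq'Q, hRq'⟩ := hmatch _ hp'
              have hqmay := hQ1.2.2.1 _ _ _ _ hQ' hq'Q
              exact MIAIncompat.stepTau (MParMay.may3 hqmay h2) (ih q' hRq')
            · exact MIAIncompat.err ⟨a, ⟨ha1, ha2⟩, Or.inr ⟨haO2, ⟨p2', h2⟩, hqm⟩⟩
          · obtain ⟨q', ⟨q'', heps, hqs⟩, hRq'⟩ := (hsim _ _ hR).2.1 a _ haO1 h1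
            exact mia_back_eps heps
              (MIAIncompat.stepTau (MParMay.may3 hqs h2) (ih q' hRq'))
  | @stepOut s a s' ha hstep hinc' ih =>
      intro q hR
      cases hstep with
      | may1 h1 h2 =>
          have haO1 : a ∈ O1 := by
            rcases hP1.2.2.2.2.1 _ _ _ h1 with h | h
            · exact absurd (Or.inl h) ha.2
            · exact h
          obtain ⟨q', ⟨q'', heps, hqs⟩, hRq'⟩ := (hsim _ _ hR).2.1 a _ haO1 h1
          exact mia_back_eps heps
            (MIAIncompat.stepOut ha (MParMay.may1 hqs h2) (ih q' hRq'))
      | may2 h1 h2 =>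
          exact MIAIncompat.stepOut ha (MParMay.may2 h1 h2) (ih q hR)

end MIAComp

/-- Theorem 4.13: compositionality of MIA-parallel composition. -/
theorem mia_par_compositional {A S1 S2 T1 : Type} (I1 O1 I2 O2 : Set A)
    (mustP1 : S1 → A → Set S1 → Prop) (mayP1 : S1 → Lbl A → S1 → Prop)
    (mustP2 : S2 → A → Set S2 → Prop) (mayP2 : S2 → Lbl A → S2 → Prop)
    (mustQ1 : T1 → A → Set T1 → Prop) (mayQ1 : T1 → Lbl A → T1 → Prop)
    (hP1 : IsMIA I1 O1 mustP1 mayP1) (hP2 : IsMIA I2 O2 mustP2 mayP2)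
    (hQ1 : IsMIA I1 O1 mustQ1 mayQ1)
    (p1 : S1) (p2 : S2) (q1 : T1)
    (href : MIARef O1 mustP1 mayP1 mustQ1 mayQ1 p1 q1)
    (hcomp : Composable I1 O1 I2 O2) :
    Composable I1 O1 I2 O2 ∧
      (¬ MIAIncompat I1 O1 I2 O2 mustQ1 mayQ1 mustP2 mayP2 (q1, p2) →
        ¬ MIAIncompat I1 O1 I2 O2 mustP1 mayP1 mustP2 mayP2 (p1, p2) ∧
          MIARef ((O1 ∪ O2) \ (I1 ∪ I2))
            (MIAParMust I1 O1 I2 O2 mustP1 mayP1 mustP2 mayP2)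
            (MIAParMay I1 O1 I2 O2 mustP1 mayP1 mustP2 mayP2)
            (MIAParMust I1 O1 I2 O2 mustQ1 mayQ1 mustP2 mayP2)
            (MIAParMay I1 O1 I2 O2 mustQ1 mayQ1 mustP2 mayP2)
            (p1, p2) (q1, p2)) := by
  obtain ⟨R, hsim, hR⟩ := href
  refine ⟨hcomp, fun hq => ?_⟩
  have hnp : ¬ MIAIncompat I1 O1 I2 O2 mustP1 mayP1 mustP2 mayP2 (p1, p2) :=
    fun h => hq (mia_transfer hP1 hP2 hQ1 hcomp hsim h q1 hR)
  refine ⟨hnp, ⟨fun s t => R s.1 t.1 ∧ s.2 = t.2 ∧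
      ¬ MIAIncompat I1 O1 I2 O2 mustQ1 mayQ1 mustP2 mayP2 t, ?_, hR, rfl, hq⟩⟩
  rintro ⟨p, sp2⟩ ⟨q, qp2⟩ ⟨hRpq, heq, hcq⟩
  dsimp only at hRpq heq hcq
  subst heq
  have hcp : ¬ MIAIncompat I1 O1 I2 O2 mustP1 mayP1 mustP2 mayP2 (p, sp2) :=
    fun h => hcq (mia_transfer hP1 hP2 hQ1 hcomp hsim h q hRpq)
  refine ⟨?_, ?_, ?_⟩
  · -- must-transitions of the composed specification are matched
    rintro a T' ⟨hm, hsrcQ, htgtQ⟩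
    cases hm with
    | @must1 q1' p2' a Q1' hq1 ha2 =>
        obtain ⟨P', hP', hmatch⟩ := (hsim _ _ hRpq).1 a _ hq1
        refine ⟨{x | x.1 ∈ P' ∧ x.2 = sp2}, ⟨MParMust.must1 hP' ha2, hcp, ?_⟩, ?_⟩
        · rintro ⟨t1, t2⟩ ⟨ht1, ht2⟩
          dsimp only at ht1 ht2
          subst t2
          obtain ⟨q', hq'Q, hRq'⟩ := hmatch _ ht1
          exact fun h => htgtQ (q', sp2) ⟨hq'Q, rfl⟩
            (mia_transfer hP1 hP2 hQ1 hcomp hsim h q' hRq')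
        · rintro ⟨t1, t2⟩ ⟨ht1, ht2⟩
          dsimp only at ht1 ht2
          subst t2
          obtain ⟨q', hq'Q, hRq'⟩ := hmatch _ ht1
          exact ⟨(q', sp2), ⟨hq'Q, rfl⟩, hRq', rfl, htgtQ _ ⟨hq'Q, rfl⟩⟩
    | @must2 q1' p2' a P2' hm2 ha1 =>
        refine ⟨{x | x.1 = p ∧ x.2 ∈ P2'}, ⟨MParMust.must2 hm2 ha1, hcp, ?_⟩, ?_⟩
        · rintro ⟨t1, t2⟩ ⟨ht1, ht2⟩
          dsimp only at ht1 ht2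
          subst t1
          exact fun h => htgtQ (q, t2) ⟨rfl, ht2⟩
            (mia_transfer hP1 hP2 hQ1 hcomp hsim h q hRpq)
        · rintro ⟨t1, t2⟩ ⟨ht1, ht2⟩
          dsimp only at ht1 ht2
          subst t1
          exact ⟨(q, t2), ⟨rfl, ht2⟩, hRpq, rfl, htgtQ _ ⟨rfl, ht2⟩⟩
  · -- output-may-transitions are matched weakly
    rintro a s' ha ⟨hm, -, htgt', -⟩
    cases hm with
    | @may1 p1' p2'' α p1'' h1 hA2 =>
        have haO1 : a ∈ O1 := by
          rcases hP1.2.2.2.2.1 _ _ _ h1 with h | h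
          · exact absurd (Or.inl h) ha.2
          · exact h
        obtain ⟨q', ⟨q'', heps, hqs⟩, hRq'⟩ := (hsim _ _ hRpq).2.1 a _ haO1 h1
        have hcq'' : ¬ MIAIncompat I1 O1 I2 O2 mustQ1 mayQ1 mustP2 mayP2 (q'', sp2) :=
          fun h => hcq (mia_back_eps heps h)
        have hcq' : ¬ MIAIncompat I1 O1 I2 O2 mustQ1 mayQ1 mustP2 mayP2 (q', sp2) :=
          fun h => hcq'' (MIAIncompat.stepOut ha (MParMay.may1 hqs hA2) h)
        refine ⟨(q', sp2), ⟨(q'', sp2), mia_lift_eps heps hcq,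
          MParMay.may1 hqs hA2, hcq'', hcq', ?_⟩, hRq', rfl, hcq'⟩
        rintro ⟨b, T', hb, hmust, hmem, t, htT, hti⟩
        cases hb
        exact hcq'' (mia_must_back hQ1 hP2 ha hmust htT hti)
    | @may2 p1' p2'' α p2''' h2 hA1 =>
        have step := MParMay.may2 (A1 := I1 ∪ O1) (A2 := I2 ∪ O2)
          (may1 := mayQ1) (p1 := q) h2 hA1
        have hcq' : ¬ MIAIncompat I1 O1 I2 O2 mustQ1 mayQ1 mustP2 mayP2 (q, p2''') :=
          fun h => hcq (MIAIncompat.stepOut ha step h)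
        refine ⟨(q, p2'''), ⟨(q, sp2), Relation.ReflTransGen.refl,
          step, hcq, hcq', ?_⟩, hRpq, rfl, hcq'⟩
        rintro ⟨b, T', hb, hmust, hmem, t, htT, hti⟩
        cases hb
        exact hcq (mia_must_back hQ1 hP2 ha hmust htT hti)
  · -- τ-may-transitions are matched weakly
    rintro s' ⟨hm, -, -, -⟩
    cases hm with
    | may1 h1 _ =>
        obtain ⟨q', heps, hRq'⟩ := (hsim _ _ hRpq).2.2 _ h1
        have hcq' : ¬ MIAIncompat I1 O1 I2 O2 mustQ1 mayQ1 mustP2 mayP2 (q', sp2) :=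
          fun h => hcq (mia_back_eps heps h)
        exact ⟨(q', sp2), mia_lift_eps heps hcq, hRq', rfl, hcq'⟩
    | @may2 p1' p2'' α p2''' h2 _ =>
        have step := MParMay.may2 (A1 := I1 ∪ O1) (A2 := I2 ∪ O2)
          (may1 := mayQ1) (p1 := q) h2 (fun x hx => nomatch hx)
        have hcq' : ¬ MIAIncompat I1 O1 I2 O2 mustQ1 mayQ1 mustP2 mayP2 (q, p2''') :=
          fun h => hcq (MIAIncompat.stepTau step h)
        exact ⟨(q, p2'''), Relation.ReflTransGen.single
          ⟨step, hcq, hcq', by rintro ⟨b, T', hb, -⟩; cases hb⟩, hRpq, rfl, hcq'⟩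
    | @may3 p1' p2'' a p1'' p2''' h1 h2 =>
        have ha1 : a ∈ I1 ∪ O1 := hP1.2.2.2.2.1 _ _ _ h1
        have ha2 : a ∈ I2 ∪ O2 := hP2.2.2.2.2.1 _ _ _ h2
        have hmem : a ∈ (I1 ∩ O2) ∪ (O1 ∩ I2) := by
          rw [← hcomp]; exact ⟨ha1, ha2⟩
        rcases hmem with ⟨haI1, haO2⟩ | ⟨haO1, -⟩
        · by_cases hqm : ∃ Q', mustQ1 q a Q'
          · obtain ⟨Q', hQ'⟩ := hqm
            obtain ⟨P'', hP'', hmatch⟩ := (hsim _ _ hRpq).1 a Q' hQ'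
            obtain ⟨P', hP', hp'⟩ := hP1.2.2.2.2.2.2 _ _ _ haI1 h1
            have hEq := hP1.2.2.2.2.2.1 _ _ _ _ haI1 hP' hP''
            subst hEq
            obtain ⟨q', hq'Q, hRq'⟩ := hmatch _ hp'
            have hqmay := hQ1.2.2.1 _ _ _ _ hQ' hq'Q
            have step := MParMay.may3 (A1 := I1 ∪ O1) (A2 := I2 ∪ O2) hqmay h2
            have hcq' : ¬ MIAIncompat I1 O1 I2 O2 mustQ1 mayQ1 mustP2 mayP2 (q', p2''') :=
              fun h => hcq (MIAIncompat.stepTau step h)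
            exact ⟨(q', p2'''), Relation.ReflTransGen.single
              ⟨step, hcq, hcq', by rintro ⟨b, T', hb, -⟩; cases hb⟩, hRq', rfl, hcq'⟩
          · exact absurd (MIAIncompat.err ⟨a, ⟨ha1, ha2⟩,
              Or.inr ⟨haO2, ⟨p2''', h2⟩, hqm⟩⟩) hcq
        · obtain ⟨q', ⟨q'', heps, hqs⟩, hRq'⟩ := (hsim _ _ hRpq).2.1 a _ haO1 h1
          have hcq'' : ¬ MIAIncompat I1 O1 I2 O2 mustQ1 mayQ1 mustP2 mayP2 (q'', sp2) :=
            fun h => hcq (mia_back_eps heps h)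
          have step := MParMay.may3 (A1 := I1 ∪ O1) (A2 := I2 ∪ O2) hqs h2
          have hcq' : ¬ MIAIncompat I1 O1 I2 O2 mustQ1 mayQ1 mustP2 mayP2 (q', p2''') :=
            fun h => hcq'' (MIAIncompat.stepTau step h)
          exact ⟨(q', p2'''), Relation.ReflTransGen.tail (mia_lift_eps heps hcq)
            ⟨step, hcq'', hcq', by rintro ⟨b, T', hb, -⟩; cases hb⟩, hRq', rfl, hcq'⟩
end

section
/- (Theorem 4.15, IA-Embedding Respects Refinement) For Interface Automata P, Q with common input and output alphabets and states p ∈ P, q ∈ Q: p ⊑_IA q if and only if ⟨p⟩ ⊑_MIA ⟨q⟩, where ⟨·⟩ denotes the embedding of IA into MIA. -/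
/-- `tr` is the transition relation of an Interface Automaton with inputs `I` and
outputs `O`: disjoint alphabets, labels within `I ∪ O`, and input-determinism. -/
def IsIA {S A : Type} (I O : Set A) (tr : S → Lbl A → S → Prop) : Prop :=
  Disjoint I O ∧
  (∀ s a s', tr s (some a) s' → a ∈ I ∪ O) ∧
  (∀ s a s' s'', a ∈ I → tr s (some a) s' → tr s (some a) s'' → s' = s'')

/-- Alternating simulation relation between IAs with common alphabets `I`, `O`. -/
def IsAltSim {S T A : Type} (I O : Set A) (trP : S → Lbl A → S → Prop)
    (trQ : T → Lbl A → T → Prop) (R : S → T → Prop) : Prop :=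
  ∀ p q, R p q →
    (∀ a q', a ∈ I → trQ q (some a) q' → ∃ p', trP p (some a) p' ∧ R p' q') ∧
    (∀ a p', a ∈ O → trP p (some a) p' → ∃ q', WeakTr trQ q (some a) q' ∧ R p' q') ∧
    (∀ p', trP p none p' → ∃ q', WeakEps trQ q q' ∧ R p' q')

/-- IA-refinement `p ⊑_IA q`. -/
def IARef {S T A : Type} (I O : Set A) (trP : S → Lbl A → S → Prop)
    (trQ : T → Lbl A → T → Prop) (p : S) (q : T) : Prop :=
  ∃ R, IsAltSim I O trP trQ R ∧ R p q

/-- Must-transitions of the embedding of an IA into MIA: singleton input-musts. -/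
def MEmbMust {S A : Type} (I : Set A) (tr : S → Lbl A → S → Prop)
    (p : S) (a : A) (P' : Set S) : Prop :=
  a ∈ I ∧ ∃ p', tr p (some a) p' ∧ P' = {p'}

/-- Theorem 4.15: the embedding of IA into MIA respects refinement; the
may-transitions of the embedding are exactly the IA's transitions. -/
theorem ia_embedding_respects_refinement {A S T : Type} (I O : Set A)
    (trP : S → Lbl A → S → Prop) (trQ : T → Lbl A → T → Prop)
    (hP : IsIA I O trP) (hQ : IsIA I O trQ) (p : S) (q : T) :
    IARef I O trP trQ p q ↔
      MIARef O (MEmbMust I trP) trP (MEmbMust I trQ) trQ p q := by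
  constructor
  · rintro ⟨R, hR, hpq⟩
    refine ⟨R, ?_, hpq⟩
    intro p q hpq
    obtain ⟨hin, hout, htau⟩ := hR p q hpq
    refine ⟨?_, hout, htau⟩
    rintro a Q' ⟨haI, q', hq', rfl⟩
    obtain ⟨p', hp', hR'⟩ := hin a q' haI hq'
    exact ⟨{p'}, ⟨haI, p', hp', rfl⟩, by rintro x rfl; exact ⟨q', rfl, hR'⟩⟩
  · rintro ⟨R, hR, hpq⟩
    refine ⟨R, ?_, hpq⟩
    intro p q hpq
    obtain ⟨hmust, hout, htau⟩ := hR p q hpq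
    refine ⟨?_, hout, htau⟩
    intro a q' haI hq'
    obtain ⟨P', ⟨_, p', hp', rfl⟩, hall⟩ := hmust a {q'} ⟨haI, q', hq', rfl⟩
    obtain ⟨q'', hq'', hR'⟩ := hall p' rfl
    cases hq''
    exact ⟨p', hp', hR'⟩
end
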